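/- arXiv:2504.17633 — 9 statements merged into one kernel-verified Lean document; each statement's English description precedes it below -/
import Mathlib

section
/- For every k-tuple 𝐒 = (S₁, …, S_k) ∈ 𝒮^k there exists a k-potential p of P such that H(p) = d_φ*(𝐒). -/
/-- An ideal (downward closed subset) of the poset `P*` obtained from `P` by removing
its minimum element `⊥` and maximum element `⊤`. -/
def IsIdealStar {P : Type*} [PartialOrder P] [OrderBot P] [OrderTop P] (I : Set P) : Prop :=
  (∀ x ∈ I, x ≠ ⊥ ∧ x ≠ ⊤) ∧ ∀ u v : P, v ∈ I → u ≤ v → u ≠ ⊥ → u ∈ I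

/-- `sup_r(I) := { e ∈ E : e⁺ ∈ I ∪ {⊥} and e⁻ ∉ I ∪ {⊥} }` where `r e = (e⁺, e⁻)`. -/
def supGen {P E : Type*} [PartialOrder P] [OrderBot P] [OrderTop P]
    (r : E → P × P) (I : Set P) : Set E :=
  {e | (r e).1 ∈ I ∪ {(⊥ : P)} ∧ (r e).2 ∉ I ∪ {(⊥ : P)}}

/-- A `k`-potential: `p(⊥) = k`, `p(⊤) = 0`, `0 ≤ p(v) ≤ k`, and `p(u) ≤ p(v)`
whenever `v ⪯ u`. -/
def IsKPotential {P : Type*} [PartialOrder P] [OrderBot P] [OrderTop P]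
    (k : ℕ) (p : P → ℤ) : Prop :=
  p ⊥ = k ∧ p ⊤ = 0 ∧ (∀ v, 0 ≤ p v ∧ p v ≤ k) ∧ ∀ u v : P, v ≤ u → p u ≤ p v

/-- For every `k`-tuple `𝐒 ∈ 𝒮^k` there exists a `k`-potential `p`
of `P` such that `H(p) = d_φ*(𝐒)`. -/
theorem stmt_2 {P E : Type*} [Fintype P] [PartialOrder P] [OrderBot P] [OrderTop P]
    [Fintype E] (hbt : (⊥ : P) ≠ ⊤)
    (k : ℕ) (hk : 0 < k)
    (r : E → P × P) (hr : ∀ e, (r e).1 ≤ (r e).2)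
    (φ : ℤ → ℤ) (hconv : ∀ x : ℤ, 2 * φ x ≤ φ (x - 1) + φ (x + 1))
    (hmono : ∀ x : ℤ, 0 ≤ x → φ x ≤ φ (x + 1)) (hzero : φ 0 = 0)
    (S : Fin k → Set E)
    (hS : ∀ i, ∃ I : Set P, IsIdealStar I ∧ S i = supGen r I) :
    ∃ p : P → ℤ, IsKPotential k p ∧
      (∑ e : E, φ (p (r e).1 - p (r e).2)) =
        ∑ e : E, φ ((Set.ncard {i : Fin k | e ∈ S i} : ℤ)) := by
  choose I hI hSI using hS
  set J : Fin k → Set P := fun i => I i ∪ {(⊥ : P)} with hJ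
  have hJdc : ∀ i, ∀ u v : P, u ≤ v → v ∈ J i → u ∈ J i := by
    intro i u v huv hv
    rcases hv with hv | hv
    · by_cases hu : u = ⊥
      · exact Or.inr hu
      · exact Or.inl ((hI i).2 u v hv huv hu)
    · simp only [Set.mem_singleton_iff] at hv
      subst hv
      have : u = ⊥ := le_bot_iff.mp huv
      exact Or.inr this
  set p : P → ℤ := fun v => (Set.ncard {i : Fin k | v ∈ J i} : ℤ) with hp
  have hsub : ∀ u v : P, u ≤ v → {i : Fin k | v ∈ J i} ⊆ {i : Fin k | u ∈ J i} := by
    intro u v huv i hi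
    exact hJdc i u v huv hi
  have hanti : ∀ u v : P, v ≤ u → p u ≤ p v := by
    intro u v hvu
    exact_mod_cast Nat.cast_le.mpr (Set.ncard_le_ncard (hsub v u hvu) (Set.toFinite _))
  refine ⟨p, ⟨?_, ?_, ?_, hanti⟩, ?_⟩
  · have : {i : Fin k | (⊥ : P) ∈ J i} = Set.univ := by
      ext i; simp [hJ]
    simp [hp, this, Set.ncard_univ]
  · have : {i : Fin k | (⊤ : P) ∈ J i} = ∅ := by
      ext i
      simp only [Set.mem_setOf_eq, Set.mem_empty_iff_false, iff_false, hJ]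
      rintro (h | h)
      · exact ((hI i).1 ⊤ h).2 rfl
      · exact hbt h.symm
    simp [hp, this]
  · intro v
    constructor
    · positivity
    · have h1 : {i : Fin k | v ∈ J i}.ncard ≤ (Set.univ : Set (Fin k)).ncard :=
        Set.ncard_le_ncard (Set.subset_univ _) (Set.toFinite _)
      have h2 : (Set.univ : Set (Fin k)).ncard = k := by simp [Set.ncard_univ]
      simp only [hp]
      exact_mod_cast h1.trans_eq h2
  · apply Finset.sum_congr rfl
    intro e _
    congr 1
    have hss : {i : Fin k | (r e).2 ∈ J i} ⊆ {i : Fin k | (r e).1 ∈ J i} :=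
      hsub _ _ (hr e)
    have hdiff : {i : Fin k | (r e).1 ∈ J i} \ {i : Fin k | (r e).2 ∈ J i}
        = {i : Fin k | e ∈ S i} := by
      ext i
      simp only [Set.mem_diff, Set.mem_setOf_eq, hSI i, supGen, hJ]
    have := Set.ncard_diff_add_ncard_of_subset hss (Set.toFinite _)
    rw [hdiff] at this
    simp only [hp]
    omega
end

section
/- For every k-potential p of P there exists a k-tuple 𝐒_p = (S₁, …, S_k) ∈ 𝒮^k such that H(p) = d_φ*(𝐒_p); in fact one may take S_i := { e ∈ E : p(e⁻) < i ≤ p(e⁺) } for each i ∈ {1,…,k}. -/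
lemma count_lemma (k : ℕ) (a b : ℤ) (h0 : 0 ≤ a) (hab : a ≤ b) (hbk : b ≤ (k:ℤ)) :
    (({i : Fin k | a ≤ (i:ℤ) ∧ (i:ℤ) < b}.ncard : ℤ)) = b - a := by
  classical
  have hcard : {i : Fin k | a ≤ (i:ℤ) ∧ (i:ℤ) < b}.ncard = (Finset.Ico a b).card := by
    rw [Set.ncard_eq_toFinset_card']
    refine Finset.card_bij (fun (i : Fin k) _ => (i : ℤ)) ?_ ?_ ?_
    · intro i hi
      simp only [Set.mem_toFinset, Set.mem_setOf_eq] at hi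
      exact Finset.mem_Ico.mpr hi
    · intro i hi j hj h
      exact Fin.ext (by exact_mod_cast h)
    · intro x hx
      obtain ⟨hx1, hx2⟩ := Finset.mem_Ico.mp hx
      have hx0 : 0 ≤ x := le_trans h0 hx1
      have hlt : x.toNat < k := by omega
      refine ⟨⟨x.toNat, hlt⟩, ?_, ?_⟩
      · simp only [Set.mem_toFinset, Set.mem_setOf_eq]
        constructor <;> simp <;> omega
      · simp; omega
  rw [hcard, Int.card_Ico]
  omega

/-- For every `k`-potential `p` of `P` there exists a `k`-tuple
`𝐒_p ∈ 𝒮^k` such that `H(p) = d_φ*(𝐒_p)`; in fact one may take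
`S_i := { e ∈ E : p(e⁻) < i ≤ p(e⁺) }` for each `i ∈ {1,…,k}` (the index `i : Fin k`
below corresponds to the integer `i + 1 ∈ {1,…,k}`). -/
theorem stmt_3 {P E : Type*} [Fintype P] [PartialOrder P] [OrderBot P] [OrderTop P]
    [Fintype E] (hbt : (⊥ : P) ≠ ⊤)
    (k : ℕ) (hk : 0 < k)
    (r : E → P × P) (hr : ∀ e, (r e).1 ≤ (r e).2)
    (φ : ℤ → ℤ) (hconv : ∀ x : ℤ, 2 * φ x ≤ φ (x - 1) + φ (x + 1))
    (hmono : ∀ x : ℤ, 0 ≤ x → φ x ≤ φ (x + 1)) (hzero : φ 0 = 0)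
    (p : P → ℤ) (hp : IsKPotential k p) :
    ∃ S : Fin k → Set E,
      S = (fun (i : Fin k) => {e | p (r e).2 < ((i : ℕ) : ℤ) + 1 ∧ ((i : ℕ) : ℤ) + 1 ≤ p (r e).1}) ∧
      (∀ i, ∃ I : Set P, IsIdealStar I ∧ S i = supGen r I) ∧
      (∑ e : E, φ (p (r e).1 - p (r e).2)) =
        ∑ e : E, φ ((Set.ncard {i : Fin k | e ∈ S i} : ℤ)) := by
  obtain ⟨hpb, hpt, hbd, hanti⟩ := hp
  refine ⟨_, rfl, ?_, ?_⟩
  · intro i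
    have hik : ((i : ℕ) : ℤ) + 1 ≤ (k : ℤ) := by
      have := i.isLt; omega
    refine ⟨{v | ((i : ℕ) : ℤ) + 1 ≤ p v ∧ v ≠ ⊥ ∧ v ≠ ⊤}, ⟨?_, ?_⟩, ?_⟩
    · intro x hx; exact hx.2
    · intro u v hv huv hub
      refine ⟨le_trans hv.1 (hanti v u huv), hub, ?_⟩
      rintro rfl
      have h1 : ((i : ℕ) : ℤ) + 1 ≤ p v := hv.1
      have h2 : p v ≤ p ⊤ := hanti v ⊤ huv
      rw [hpt] at h2
      omega
    · ext e
      simp only [supGen, Set.mem_setOf_eq, Set.mem_union, Set.mem_singleton_iff]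
      constructor
      · rintro ⟨h2, h1⟩
        constructor
        · by_cases hb : (r e).1 = ⊥
          · exact Or.inr hb
          · refine Or.inl ⟨h1, hb, ?_⟩
            rintro ht
            rw [ht, hpt] at h1; omega
        · rintro (⟨hle, -, -⟩ | hb)
          · omega
          · have : (r e).1 ≤ (⊥ : P) := hb ▸ hr e
            have h1' : (r e).1 = ⊥ := le_bot_iff.mp this
            rw [hb, hpb] at h2
            omega
      · rintro ⟨h1, h2⟩
        have hplus : ((i : ℕ) : ℤ) + 1 ≤ p (r e).1 := by
          rcases h1 with ⟨hle, -, -⟩ | hb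
          · exact hle
          · rw [hb, hpb]; exact hik
        refine ⟨?_, hplus⟩
        have hnb : (r e).2 ≠ ⊥ := fun h => h2 (Or.inr h)
        by_cases ht : (r e).2 = ⊤
        · rw [ht, hpt]; omega
        · have : ¬ (((i : ℕ) : ℤ) + 1 ≤ p (r e).2 ∧ (r e).2 ≠ ⊥ ∧ (r e).2 ≠ ⊤) :=
            fun h => h2 (Or.inl h)
          push_neg at this
          have hlt : ¬ (((i : ℕ) : ℤ) + 1 ≤ p (r e).2) := fun h => ht (this h hnb)
          omega
  · refine Finset.sum_congr rfl (fun e _ => ?_)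
    congr 1
    have hset : {i : Fin k | e ∈ {e' | p (r e').2 < ((i : ℕ) : ℤ) + 1 ∧ ((i : ℕ) : ℤ) + 1 ≤ p (r e').1}}
        = {i : Fin k | p (r e).2 ≤ (i : ℤ) ∧ (i : ℤ) < p (r e).1} := by
      ext i; simp only [Set.mem_setOf_eq]; omega
    rw [hset, count_lemma k _ _ (hbd (r e).2).1 (hanti (r e).2 (r e).1 (hr e)) (hbd (r e).1).2]
end

section
/- The minimum of H(p) over all k-potentials p of P equals the minimum of d_φ*(𝐒) over all k-tuples 𝐒 ∈ 𝒮^k (both minima exist: k-potentials exist and 𝒮 is nonempty). -/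
lemma fin_count (k : ℕ) (a b : ℤ) (h0 : 0 ≤ a) (hab : a ≤ b) (hbk : b ≤ (k : ℤ)) :
    (({i : Fin k | a ≤ (i : ℤ) ∧ (i : ℤ) < b}).ncard : ℤ) = b - a := by
  classical
  have hset : {i : Fin k | a ≤ (i : ℤ) ∧ (i : ℤ) < b} =
      ↑(Finset.univ.filter (fun i : Fin k => a ≤ (i : ℤ) ∧ (i : ℤ) < b)) := by
    ext i; simp
  rw [hset, Set.ncard_coe_finset]
  have hcard : (Finset.univ.filter (fun i : Fin k => a ≤ (i : ℤ) ∧ (i : ℤ) < b)).card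
      = (Finset.Ico a b).card := by
    apply Finset.card_bij (fun (i : Fin k) _ => ((i : ℕ) : ℤ))
    · intro i hi
      simp only [Finset.mem_filter, Finset.mem_univ, true_and] at hi
      simpa [Finset.mem_Ico] using hi
    · intro i hi j hj h
      exact Fin.val_injective (Int.natCast_inj.mp h)
    · intro x hx
      simp only [Finset.mem_Ico] at hx
      have hx0 : 0 ≤ x := le_trans h0 hx.1
      have hxk : x.toNat < k := by omega
      refine ⟨⟨x.toNat, hxk⟩, ?_, ?_⟩
      · simp only [Finset.mem_filter, Finset.mem_univ, true_and]
        constructor <;> simp [Int.toNat_of_nonneg hx0] <;> omega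
      · simp [Int.toNat_of_nonneg hx0]
  rw [hcard, Int.card_Ico, Int.toNat_of_nonneg (sub_nonneg.mpr hab)]

/-- The minimum of `H(p)` over all `k`-potentials `p` of `P` equals
the minimum of `d_φ*(𝐒)` over all `k`-tuples `𝐒 ∈ 𝒮^k`; both minima exist, i.e. there
are a minimizing `k`-potential `p₀` and a minimizing tuple `𝐒₀ ∈ 𝒮^k`, and
`H(p₀) = d_φ*(𝐒₀)`. -/
theorem stmt_4 {P E : Type*} [Fintype P] [PartialOrder P] [OrderBot P] [OrderTop P]
    [Fintype E] (hbt : (⊥ : P) ≠ ⊤)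
    (k : ℕ) (hk : 0 < k)
    (r : E → P × P) (hr : ∀ e, (r e).1 ≤ (r e).2)
    (φ : ℤ → ℤ) (hconv : ∀ x : ℤ, 2 * φ x ≤ φ (x - 1) + φ (x + 1))
    (hmono : ∀ x : ℤ, 0 ≤ x → φ x ≤ φ (x + 1)) (hzero : φ 0 = 0) :
    ∃ (p₀ : P → ℤ) (S₀ : Fin k → Set E),
      IsKPotential k p₀ ∧
      (∀ i, ∃ I : Set P, IsIdealStar I ∧ S₀ i = supGen r I) ∧
      (∀ p : P → ℤ, IsKPotential k p →
        (∑ e : E, φ (p₀ (r e).1 - p₀ (r e).2)) ≤ ∑ e : E, φ (p (r e).1 - p (r e).2)) ∧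
      (∀ S : Fin k → Set E, (∀ i, ∃ I : Set P, IsIdealStar I ∧ S i = supGen r I) →
        (∑ e : E, φ ((Set.ncard {i : Fin k | e ∈ S₀ i} : ℤ))) ≤
          ∑ e : E, φ ((Set.ncard {i : Fin k | e ∈ S i} : ℤ))) ∧
      (∑ e : E, φ (p₀ (r e).1 - p₀ (r e).2)) =
        ∑ e : E, φ ((Set.ncard {i : Fin k | e ∈ S₀ i} : ℤ)) := by
  classical
  set A : Set (P → ℤ) := {p | IsKPotential k p} with hA
  -- A is finite
  have hAfin : A.Finite := by
    apply Set.Finite.subset (Set.Finite.pi (fun _ : P => Set.finite_Icc (0 : ℤ) k))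
    intro p hp v _
    exact ⟨(hp.2.2.1 v).1, (hp.2.2.1 v).2⟩
  -- A is nonempty
  have hAne : A.Nonempty := by
    refine ⟨fun v => if v = ⊥ then (k : ℤ) else 0, ?_, ?_, ?_, ?_⟩
    · simp
    · simp [Ne.symm hbt]
    · intro v; by_cases h : v = ⊥ <;> simp [h] <;> positivity
    · intro u v hvu
      by_cases hu : u = ⊥
      · have hv : v = ⊥ := le_bot_iff.mp (hu ▸ hvu)
        simp [hu, hv]
      · by_cases hv : v = ⊥ <;> simp [hu, hv] <;> positivity
  obtain ⟨p₀, hp₀, hminp⟩ :=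
    Set.exists_min_image A (fun p => ∑ e : E, φ (p (r e).1 - p (r e).2)) hAfin hAne
  have hp₀' : IsKPotential k p₀ := hp₀
  obtain ⟨hpb, hpt, hpbd, hpanti⟩ := hp₀'
  -- level-set ideals of p₀
  set I₀ : Fin k → Set P := fun i => {v | v ≠ ⊥ ∧ v ≠ ⊤ ∧ (i : ℤ) + 1 ≤ p₀ v} with hI₀
  set S₀ : Fin k → Set E := fun i => supGen r (I₀ i) with hS₀
  have hIdeal : ∀ i, IsIdealStar (I₀ i) := by
    intro i
    constructor
    · intro x hx; exact ⟨hx.1, hx.2.1⟩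
    · intro u v hv huv hu
      refine ⟨hu, ?_, le_trans hv.2.2 (hpanti v u huv)⟩
      intro hut
      exact hv.2.1 (top_le_iff.mp (hut ▸ huv))
  have hmemI : ∀ (i : Fin k) (v : P), v ∈ I₀ i ∪ {(⊥ : P)} ↔ (i : ℤ) + 1 ≤ p₀ v := by
    intro i v
    constructor
    · rintro (hv | hv)
      · exact hv.2.2
      · rw [Set.mem_singleton_iff] at hv
        rw [hv, hpb]
        have : (i : ℤ) < k := by exact_mod_cast i.isLt
        omega
    · intro h
      by_cases hv : v = ⊥
      · exact Or.inr hv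
      · left
        refine ⟨hv, ?_, h⟩
        intro hvt
        rw [hvt, hpt] at h
        have : (0 : ℤ) ≤ i := by positivity
        omega
  -- the key per-edge count for S₀
  have hcount0 : ∀ e : E, ((Set.ncard {i : Fin k | e ∈ S₀ i} : ℤ))
      = p₀ (r e).1 - p₀ (r e).2 := by
    intro e
    have hseteq : {i : Fin k | e ∈ S₀ i}
        = {i : Fin k | p₀ (r e).2 ≤ (i : ℤ) ∧ (i : ℤ) < p₀ (r e).1} := by
      ext i
      simp only [Set.mem_setOf_eq, hS₀, supGen, hmemI]
      constructor
      · rintro ⟨h1, h2⟩; omega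
      · rintro ⟨h1, h2⟩; exact ⟨by omega, by omega⟩
    rw [hseteq]
    exact fin_count k _ _ (hpbd (r e).2).1 (hpanti (r e).2 (r e).1 (hr e)) (hpbd (r e).1).2
  refine ⟨p₀, S₀, hp₀, fun i => ⟨I₀ i, hIdeal i, rfl⟩, fun p hp => hminp p hp, ?_, ?_⟩
  · -- minimality over tuples
    intro S hS
    choose I hIid hSI using hS
    -- the potential associated with S
    set q : P → ℤ := fun v => ((Set.ncard {i : Fin k | v ∈ I i ∪ {(⊥ : P)}} : ℤ)) with hq
    have hsub : ∀ v : P, {i : Fin k | v ∈ I i ∪ {(⊥ : P)}} ⊆ Set.univ := fun v => Set.subset_univ _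
    have hqbd : ∀ v, 0 ≤ q v ∧ q v ≤ k := by
      intro v
      constructor
      · positivity
      · have := Set.ncard_le_ncard (hsub v) (Set.finite_univ)
        rw [Set.ncard_univ, Nat.card_eq_fintype_card, Fintype.card_fin] at this
        simp only [hq]
        exact_mod_cast this
    have hqanti : ∀ u v : P, v ≤ u → q u ≤ q v := by
      intro u v hvu
      have hsub2 : {i : Fin k | u ∈ I i ∪ {(⊥ : P)}} ⊆ {i : Fin k | v ∈ I i ∪ {(⊥ : P)}} := by
        intro i hi
        rcases hi with hi | hi
        · by_cases hv : v = ⊥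
          · exact Or.inr hv
          · exact Or.inl ((hIid i).2 v u hi hvu hv)
        · rw [Set.mem_singleton_iff] at hi
          have : v = ⊥ := le_bot_iff.mp (hi ▸ hvu)
          exact Or.inr this
      simp only [hq]
      exact_mod_cast Set.ncard_le_ncard hsub2 (Set.toFinite _)
    have hqpot : IsKPotential k q := by
      refine ⟨?_, ?_, hqbd, hqanti⟩
      · have : {i : Fin k | (⊥ : P) ∈ I i ∪ {(⊥ : P)}} = Set.univ := by
          ext i; simp
        simp only [hq, this, Set.ncard_univ, Nat.card_eq_fintype_card, Fintype.card_fin]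
      · have : {i : Fin k | (⊤ : P) ∈ I i ∪ {(⊥ : P)}} = ∅ := by
          ext i
          simp only [Set.mem_setOf_eq, Set.mem_empty_iff_false, iff_false, Set.mem_union,
            Set.mem_singleton_iff]
          push_neg
          exact ⟨fun h => ((hIid i).1 ⊤ h).2 rfl, Ne.symm hbt⟩
        simp only [hq]
        rw [this, Set.ncard_empty]
        simp
    -- per edge: μ_e(S) = q e⁺ - q e⁻
    have hcnt : ∀ e : E, ((Set.ncard {i : Fin k | e ∈ S i} : ℤ)) = q (r e).1 - q (r e).2 := by
      intro e
      set B := {i : Fin k | (r e).1 ∈ I i ∪ {(⊥ : P)}}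
      set Aa := {i : Fin k | (r e).2 ∈ I i ∪ {(⊥ : P)}}
      have hAB : Aa ⊆ B := by
        intro i hi
        rcases hi with hi | hi
        · by_cases h1 : (r e).1 = ⊥
          · exact Or.inr h1
          · exact Or.inl ((hIid i).2 _ _ hi (hr e) h1)
        · rw [Set.mem_singleton_iff] at hi
          exact Or.inr (le_bot_iff.mp (hi ▸ hr e))
      have hseteq : {i : Fin k | e ∈ S i} = B \ Aa := by
        ext i
        simp only [Set.mem_setOf_eq, hSI i, supGen, Set.mem_diff]
        rfl
      rw [hseteq, Set.ncard_diff hAB (Set.toFinite _)]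
      have hle : Aa.ncard ≤ B.ncard := Set.ncard_le_ncard hAB (Set.toFinite _)
      simp only [hq]
      push_cast [Nat.cast_sub hle]
      ring
    calc (∑ e : E, φ ((Set.ncard {i : Fin k | e ∈ S₀ i} : ℤ)))
        = ∑ e : E, φ (p₀ (r e).1 - p₀ (r e).2) := by
          exact Finset.sum_congr rfl (fun e _ => by rw [hcount0 e])
      _ ≤ ∑ e : E, φ (q (r e).1 - q (r e).2) := hminp q hqpot
      _ = ∑ e : E, φ ((Set.ncard {i : Fin k | e ∈ S i} : ℤ)) := by
          exact Finset.sum_congr rfl (fun e _ => by rw [hcnt e])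
  · exact Finset.sum_congr rfl (fun e _ => by rw [hcount0 e])
end

section
/- Suppose additionally that e⁺ ≺ e⁻ (strictly) for every e ∈ E and that there is a positive integer q with |sup_r(I)| = q for every ideal I of P*. Then θ(⊥) = q, θ(⊤) = −q, and θ(x) = 0 for every x ∈ P*. -/
lemma diff_ncard_eq {E : Type*} {S T : Set E} (hS : S.Finite) (hT : T.Finite)
    (h : S.ncard = T.ncard) : (S \ T).ncard = (T \ S).ncard := by
  have h1 := Set.encard_diff_add_encard_inter S T
  have h2 := Set.encard_diff_add_encard_inter T S
  rw [Set.inter_comm T S] at h2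
  have hE : S.encard = T.encard := by
    rw [← hS.cast_ncard_eq, ← hT.cast_ncard_eq, h]
  have hi : (S ∩ T).encard ≠ ⊤ := (hS.inter_of_left T).encard_lt_top.ne
  have h3 : (S \ T).encard + (S ∩ T).encard = (T \ S).encard + (S ∩ T).encard := by
    rw [h1, hE, ← h2]
  rw [Set.ncard_def, Set.ncard_def, WithTop.add_right_cancel hi h3]

/-- Suppose `e⁺ ≺ e⁻` strictly for every `e ∈ E` and there is a positive
integer `q` with `|sup_r(I)| = q` for every ideal `I` of `P*`. Then `θ(⊥) = q`,
`θ(⊤) = −q`, and `θ(x) = 0` for every `x ∈ P*`, where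
`θ(x) := |{e : e⁺ = x}| − |{e : e⁻ = x}|`. -/
theorem stmt_5 {P E : Type*} [Fintype P] [PartialOrder P] [OrderBot P] [OrderTop P]
    [Fintype E] (hbt : (⊥ : P) ≠ ⊤)
    (r : E → P × P) (hr : ∀ e, (r e).1 < (r e).2)
    (q : ℕ) (hq : 0 < q)
    (hcard : ∀ I : Set P, IsIdealStar I → (supGen r I).ncard = q) :
    ((Set.ncard {e : E | (r e).1 = ⊥} : ℤ) - (Set.ncard {e : E | (r e).2 = ⊥} : ℤ) = q) ∧
    ((Set.ncard {e : E | (r e).1 = ⊤} : ℤ) - (Set.ncard {e : E | (r e).2 = ⊤} : ℤ) = -q) ∧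
    (∀ x : P, x ≠ ⊥ → x ≠ ⊤ →
      (Set.ncard {e : E | (r e).1 = x} : ℤ) - (Set.ncard {e : E | (r e).2 = x} : ℤ) = 0) := by
  refine ⟨?_, ?_, ?_⟩
  · -- θ(⊥) = q, using I = ∅
    have hid : IsIdealStar (∅ : Set P) := ⟨by simp, by simp⟩
    have h0 := hcard ∅ hid
    have hsup : supGen r (∅ : Set P) = {e : E | (r e).1 = ⊥} := by
      ext e
      simp only [supGen, Set.mem_setOf_eq, Set.empty_union, Set.mem_singleton_iff]
      constructor
      · exact fun h => h.1
      · intro h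
        refine ⟨h, fun hc => ?_⟩
        have := hr e
        rw [h, hc] at this
        exact lt_irrefl _ this
    have hneg : {e : E | (r e).2 = ⊥} = ∅ := by
      ext e
      simp only [Set.mem_setOf_eq, Set.mem_empty_iff_false, iff_false]
      intro h
      have := hr e
      rw [h] at this
      exact not_lt_bot this
    rw [hsup] at h0
    rw [h0, hneg]
    simp
  · -- θ(⊤) = -q, using I = P*
    set I : Set P := {y | y ≠ ⊥ ∧ y ≠ ⊤} with hI
    have hid : IsIdealStar I := by
      refine ⟨fun x hx => hx, fun u v hv huv hu => ⟨hu, fun hc => ?_⟩⟩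
      exact hv.2 (top_le_iff.mp (hc ▸ huv))
    have h0 := hcard I hid
    have hIc : I ∪ {(⊥ : P)} = {y | y ≠ ⊤} := by
      ext y
      simp only [hI, Set.mem_union, Set.mem_setOf_eq, Set.mem_singleton_iff]
      constructor
      · rintro (⟨_, h⟩ | rfl)
        · exact h
        · exact hbt
      · intro h
        by_cases hy : y = ⊥
        · exact Or.inr hy
        · exact Or.inl ⟨hy, h⟩
    have hsup : supGen r I = {e : E | (r e).2 = ⊤} := by
      ext e
      simp only [supGen, hIc, Set.mem_setOf_eq, not_not]
      constructor
      · exact fun h => h.2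
      · intro h
        refine ⟨fun hc => ?_, h⟩
        have := hr e
        rw [hc, h] at this
        exact lt_irrefl _ this
    have hpos : {e : E | (r e).1 = ⊤} = ∅ := by
      ext e
      simp only [Set.mem_setOf_eq, Set.mem_empty_iff_false, iff_false]
      intro h
      have := hr e
      rw [h] at this
      exact not_top_lt this
    rw [hsup] at h0
    rw [h0, hpos]
    simp
  · -- θ(x) = 0 for x ∈ P*
    intro x hxb hxt
    set I : Set P := {y | y ≤ x ∧ y ≠ ⊥} with hI
    set J : Set P := {y | y < x ∧ y ≠ ⊥} with hJ
    have hxtop : x < ⊤ := lt_top_iff_ne_top.mpr hxt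
    have hidI : IsIdealStar I := by
      refine ⟨fun y hy => ⟨hy.2, fun hc => hxt ?_⟩,
        fun u v hv huv hu => ⟨huv.trans hv.1, hu⟩⟩
      exact top_le_iff.mp (hc ▸ hy.1)
    have hidJ : IsIdealStar J := by
      refine ⟨fun y hy => ⟨hy.2, fun hc => not_top_lt (hc ▸ hy.1)⟩,
        fun u v hv huv hu => ⟨lt_of_le_of_lt huv hv.1, hu⟩⟩
    have hIc : I ∪ {(⊥ : P)} = {y | y ≤ x} := by
      ext y
      simp only [hI, Set.mem_union, Set.mem_setOf_eq, Set.mem_singleton_iff]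
      constructor
      · rintro (⟨h, _⟩ | rfl)
        · exact h
        · exact bot_le
      · intro h
        by_cases hy : y = ⊥
        · exact Or.inr hy
        · exact Or.inl ⟨h, hy⟩
    have hJc : J ∪ {(⊥ : P)} = {y | y < x} := by
      ext y
      simp only [hJ, Set.mem_union, Set.mem_setOf_eq, Set.mem_singleton_iff]
      constructor
      · rintro (⟨h, _⟩ | rfl)
        · exact h
        · exact bot_lt_iff_ne_bot.mpr hxb
      · intro h
        by_cases hy : y = ⊥
        · exact Or.inr hy
        · exact Or.inl ⟨h, hy⟩
    have hSI : supGen r I = {e : E | (r e).1 ≤ x ∧ ¬ (r e).2 ≤ x} := by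
      unfold supGen; rw [hIc]; rfl
    have hSJ : supGen r J = {e : E | (r e).1 < x ∧ ¬ (r e).2 < x} := by
      unfold supGen; rw [hJc]; rfl
    have hdiff1 : supGen r I \ supGen r J = {e : E | (r e).1 = x} := by
      rw [hSI, hSJ]
      ext e
      simp only [Set.mem_diff, Set.mem_setOf_eq, not_and, not_not]
      constructor
      · rintro ⟨⟨h1, h2⟩, h3⟩
        by_contra hne
        have h4 : (r e).1 < x := lt_of_le_of_ne h1 hne
        exact h2 (le_of_lt (h3 h4))
      · intro h
        refine ⟨⟨le_of_eq h, fun hc => ?_⟩, fun hc => absurd hc (by rw [h]; exact lt_irrefl x)⟩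
        have := hr e
        rw [h] at this
        exact absurd (le_antisymm hc (le_of_lt this)) (ne_of_gt this)
    have hdiff2 : supGen r J \ supGen r I = {e : E | (r e).2 = x} := by
      rw [hSI, hSJ]
      ext e
      simp only [Set.mem_diff, Set.mem_setOf_eq, not_and, not_not]
      constructor
      · rintro ⟨⟨h1, h2⟩, h3⟩
        exact ((h3 h1.le).lt_or_eq).resolve_left h2
      · intro h
        have h1 : (r e).1 < x := h ▸ hr e
        exact ⟨⟨h1, fun hc => lt_irrefl x (h ▸ hc)⟩, fun _ => le_of_eq h⟩
    have hEq : (supGen r I).ncard = (supGen r J).ncard := by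
      rw [hcard I hidI, hcard J hidJ]
    have := diff_ncard_eq (Set.toFinite _) (Set.toFinite _) hEq
    rw [hdiff1, hdiff2] at this
    rw [this]
    ring
end

section
/- Suppose that e⁺ ≺ e⁻ (strictly) for every e ∈ E, that there is a positive integer q with |sup_r(I)| = q for every ideal I of P*, and that Θ⁺(x) ∪ Θ⁻(x) ≠ ∅ for every x ∈ P*. Then the map sup_r from the ideals of P* to 𝒮 is a bijection, and for any two ideals I, I′ of P*: I ⊆ I′ if and only if sup_r(I) ≤ sup_r(I′). -/
/-- The partial order on `E`: `e ≤ e'` iff `e = e'` or `e⁻ ⪯ e'⁺`. -/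
def elemLE {P E : Type*} [PartialOrder P] (r : E → P × P) (e e' : E) : Prop :=
  e = e' ∨ (r e).2 ≤ (r e').1

/-- `S ≤ T` iff there is a bijection `π : S → T` with `e ≤ π(e)` for all `e ∈ S`. -/
def setLE {P E : Type*} [PartialOrder P] (r : E → P × P) (S T : Set E) : Prop :=
  ∃ π : E → E, Set.BijOn π S T ∧ ∀ e ∈ S, elemLE r e (π e)

/-!
Adding one element `x` to an ideal `I` replaces `Θ⁻(x)` by `Θ⁺(x)` in `sup_r(I)`. As all supports
have size `q`, this forces `|Θ⁻(x)| = |Θ⁺(x)|`, and any bijection `Θ⁻(x) → Θ⁺(x)`, extended by the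
identity, witnesses `sup_r(I) ≤ sup_r(I ∪ {x})` because `e⁻ = x = π(e)⁺`; chaining such steps gives
monotonicity. Conversely, if `I ⊄ I'`, let `x` be maximal in `I \ I'`. The hypothesis on `Θ` and
`|Θ⁻(x)| = |Θ⁺(x)|` give some `e ∈ Θ⁺(x)`; maximality puts `e` in `sup_r(I)`, while every `e' ≥ e`
has `e'⁺ ≥ x ∉ I' ∪ {⊥}`, so `e'` is not in `sup_r(I')`. Injectivity of `sup_r` follows.
-/

open Set

theorem Set.exists_bijOn_of_ncard_eq {α : Type*} [Finite α] {s t : Set α}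
    (h : s.ncard = t.ncard) : ∃ f : α → α, BijOn f s t := by
  cases isEmpty_or_nonempty α
  · exact ⟨id, by simp only [eq_empty_of_isEmpty, bijOn_empty_iff_left]⟩
  · refine s.toFinite.exists_bijOn_of_encard_eq ?_
    rw [← s.toFinite.cast_ncard_eq, ← t.toFinite.cast_ncard_eq, h]

theorem Set.bijOn_piecewise_sdiff_union {α : Type*} {s a b : Set α} {f : α → α}
    [DecidablePred (· ∈ a)] (has : a ⊆ s) (hsb : Disjoint s b) (hf : BijOn f a b) :
    BijOn (a.piecewise f id) s (s \ a ∪ b) := by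
  have hid : BijOn (a.piecewise f id) (s \ a) (s \ a) :=
    (bijOn_id _).congr fun x hx => (piecewise_eq_of_notMem _ _ _ hx.2).symm
  have hfa : BijOn (a.piecewise f id) a b := hf.congr fun x hx => (piecewise_eq_of_mem _ _ _ hx).symm
  have h := hid.union hfa <| (injOn_union disjoint_sdiff_left).2 ⟨hid.injOn, hfa.injOn,
    fun x hx y hy => hsb.ne_of_mem (hid.mapsTo hx).1 (hfa.mapsTo hy)⟩
  rwa [sdiff_union_of_subset has] at h

section Order

variable {P E : Type*} [PartialOrder P] {r : E → P × P}

theorem elemLE_refl (e : E) : elemLE r e e := Or.inl rfl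

theorem elemLE.trans (hr : ∀ e, (r e).1 ≤ (r e).2) {a b c : E} (hab : elemLE r a b)
    (hbc : elemLE r b c) : elemLE r a c := by
  rcases hab with rfl | hab
  · exact hbc
  rcases hbc with rfl | hbc
  · exact Or.inr hab
  · exact Or.inr (hab.trans ((hr b).trans hbc))

theorem elemLE.fst_le (hr : ∀ e, (r e).1 ≤ (r e).2) {e e' : E} (h : elemLE r e e') :
    (r e).1 ≤ (r e').1 := by
  rcases h with rfl | h
  · exact le_rfl
  · exact (hr e).trans h

theorem setLE_refl (S : Set E) : setLE r S S := ⟨id, bijOn_id S, fun e _ => elemLE_refl e⟩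

theorem setLE.trans (hr : ∀ e, (r e).1 ≤ (r e).2) {S T U : Set E} (hST : setLE r S T)
    (hTU : setLE r T U) : setLE r S U := by
  obtain ⟨π, hπ, hle⟩ := hST
  obtain ⟨π', hπ', hle'⟩ := hTU
  exact ⟨π' ∘ π, hπ'.comp hπ, fun e he => (hle e he).trans hr (hle' (π e) (hπ.mapsTo he))⟩

end Order

section Ideal

variable {P : Type*} [PartialOrder P] [OrderBot P] [OrderTop P] {I I' : Set P} {x : P}

theorem IsIdealStar.isLowerSet_union_bot (hI : IsIdealStar I) : IsLowerSet (I ∪ {⊥}) := by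
  rintro v u huv (hv | rfl)
  · by_cases hu : u = ⊥
    · exact Or.inr hu
    · exact Or.inl (hI.2 u v hv huv hu)
  · exact Or.inr (le_bot_iff.1 huv)

theorem IsLowerSet.isIdealStar_sdiff_bot {s : Set P} (hs : IsLowerSet s) (htop : ⊤ ∉ s) :
    IsIdealStar (s \ {⊥}) :=
  ⟨fun _ hx => ⟨hx.2, fun h => htop (h ▸ hx.1)⟩,
    fun _ _ hv huv hu => ⟨hs huv hv.1, hu⟩⟩

theorem exists_isIdealStar_insert (hxb : x ≠ ⊥) (hxt : x ≠ ⊤) :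
    ∃ I : Set P, IsIdealStar I ∧ x ∉ I ∧ IsIdealStar (insert x I) := by
  refine ⟨Iio x \ {⊥}, isLowerSet_Iio x |>.isIdealStar_sdiff_bot not_top_lt,
    fun hx => lt_irrefl x hx.1, ?_⟩
  have : insert x (Iio x \ {⊥}) = Iic x \ {⊥} := by
    ext y
    simp only [mem_insert_iff, mem_sdiff, mem_Iio, mem_Iic, mem_singleton_iff, le_iff_lt_or_eq]
    grind
  rw [this]
  exact (isLowerSet_Iic x).isIdealStar_sdiff_bot fun h => hxt (top_le_iff.1 h)

theorem IsIdealStar.exists_insert_of_ssubset [Finite P] (hI : IsIdealStar I)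
    (hI' : IsIdealStar I') (hII' : I ⊂ I') : ∃ x ∈ I' \ I, IsIdealStar (insert x I) := by
  obtain ⟨x, hx⟩ := (toFinite (I' \ I)).exists_minimal (nonempty_of_ssubset hII')
  refine ⟨x, hx.1, ?_, ?_⟩
  · rintro y (rfl | hy)
    exacts [hI'.1 y hx.1.1, hI.1 y hy]
  · rintro u v (rfl | hv) huv hu
    · by_contra hnot
      have hu' : u ∈ I' \ I := ⟨hI'.2 u v hx.1.1 huv hu, fun h => hnot (Or.inr h)⟩
      exact hnot (Or.inl (le_antisymm huv (hx.2 hu' huv)))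
    · exact Or.inr (hI.2 u v hv huv hu)

end Ideal

section Supports

variable {P E : Type*} [PartialOrder P] [OrderBot P] [OrderTop P] {r : E → P × P}
  {I I' : Set P} {x : P}

def thetaPlus (r : E → P × P) (x : P) : Set E := {e | (r e).1 = x}

def thetaMinus (r : E → P × P) (x : P) : Set E := {e | (r e).2 = x}

theorem disjoint_supGen_thetaPlus (hx : x ∉ I) (hxb : x ≠ ⊥) :
    Disjoint (supGen r I) (thetaPlus r x) :=
  disjoint_left.2 fun _ he hex => he.1.elim (fun h => hx (hex ▸ h)) fun h => hxb (hex ▸ h)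

theorem thetaMinus_subset_supGen (hr : ∀ e, (r e).1 < (r e).2) (hx : x ∉ I)
    (hIx : IsIdealStar (insert x I)) : thetaMinus r x ⊆ supGen r I := by
  intro e (hex : (r e).2 = x)
  have hxb : x ≠ ⊥ := (hIx.1 x (mem_insert x I)).1
  have hlt : (r e).1 < x := hex ▸ hr e
  refine ⟨?_, hex ▸ fun h => h.elim hx hxb⟩
  have h := hIx.isLowerSet_union_bot hlt.le (Or.inl (mem_insert x I))
  rwa [insert_union, mem_insert_iff, or_iff_right hlt.ne] at h

theorem supGen_insert (hr : ∀ e, (r e).1 < (r e).2) (hI : IsIdealStar I) (hx : x ∉ I)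
    (hxb : x ≠ ⊥) : supGen r (insert x I) = supGen r I \ thetaMinus r x ∪ thetaPlus r x := by
  ext e
  have hsucc : (r e).1 = x → (r e).2 ≠ x ∧ (r e).2 ∉ I ∧ (r e).2 ≠ ⊥ := by
    intro hex
    have hlt : x < (r e).2 := hex ▸ hr e
    exact ⟨hlt.ne', fun h => hx (hI.2 x _ h hlt.le hxb), ne_bot_of_gt hlt⟩
  simp only [supGen, thetaPlus, thetaMinus, mem_union, mem_sdiff, mem_ofPred_eq, mem_insert_iff,
    mem_singleton_iff]
  tauto

variable [Finite E] {q : ℕ} (hcard : ∀ I : Set P, IsIdealStar I → (supGen r I).ncard = q)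
include hcard

theorem ncard_thetaMinus_eq_ncard_thetaPlus_of_insert (hr : ∀ e, (r e).1 < (r e).2)
    (hI : IsIdealStar I) (hx : x ∉ I) (hIx : IsIdealStar (insert x I)) :
    (thetaMinus r x).ncard = (thetaPlus r x).ncard := by
  have hxb : x ≠ ⊥ := (hIx.1 x (mem_insert x I)).1
  have hsub := thetaMinus_subset_supGen hr hx hIx
  have hq := hcard _ hIx
  rw [supGen_insert hr hI hx hxb,
    ncard_union_eq ((disjoint_supGen_thetaPlus hx hxb).mono_left sdiff_subset),
    ncard_sdiff hsub, hcard I hI] at hq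
  have hle : (thetaMinus r x).ncard ≤ q := hcard I hI ▸ ncard_le_ncard hsub
  omega

theorem ncard_thetaMinus_eq_ncard_thetaPlus (hr : ∀ e, (r e).1 < (r e).2) (hxb : x ≠ ⊥)
    (hxt : x ≠ ⊤) : (thetaMinus r x).ncard = (thetaPlus r x).ncard := by
  obtain ⟨I, hI, hx, hIx⟩ := exists_isIdealStar_insert hxb hxt
  exact ncard_thetaMinus_eq_ncard_thetaPlus_of_insert hcard hr hI hx hIx

theorem setLE_supGen_insert (hr : ∀ e, (r e).1 < (r e).2) (hI : IsIdealStar I) (hx : x ∉ I)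
    (hIx : IsIdealStar (insert x I)) : setLE r (supGen r I) (supGen r (insert x I)) := by
  classical
  have hxb : x ≠ ⊥ := (hIx.1 x (mem_insert x I)).1
  obtain ⟨f, hf⟩ := exists_bijOn_of_ncard_eq
    (ncard_thetaMinus_eq_ncard_thetaPlus_of_insert hcard hr hI hx hIx)
  refine ⟨(thetaMinus r x).piecewise f id, ?_, fun e _ => ?_⟩
  · rw [supGen_insert hr hI hx hxb]
    exact bijOn_piecewise_sdiff_union (thetaMinus_subset_supGen hr hx hIx)
      (disjoint_supGen_thetaPlus hx hxb) hf
  · by_cases he : e ∈ thetaMinus r x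
    · rw [piecewise_eq_of_mem _ _ _ he]
      exact Or.inr ((show (r e).2 = x from he).trans (hf.mapsTo he).symm).le
    · rw [piecewise_eq_of_notMem _ _ _ he]
      exact elemLE_refl e

theorem setLE_supGen_of_subset [Finite P] (hr : ∀ e, (r e).1 < (r e).2) {I I' : Set P}
    (hI : IsIdealStar I) (hI' : IsIdealStar I') (hII' : I ⊆ I') : setLE r (supGen r I) (supGen r I') := by
  obtain rfl | hlt := hII'.eq_or_ssubset
  · exact setLE_refl _
  obtain ⟨x, hx, hIx⟩ := hI.exists_insert_of_ssubset hI' hlt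
  exact (setLE_supGen_insert hcard hr hI hx.2 hIx).trans (fun e => (hr e).le)
    (setLE_supGen_of_subset hr hIx hI' (insert_subset hx.1 hII'))
termination_by (I' \ I).ncard
decreasing_by
  exact ncard_lt_ncard (ssubset_of_subset_not_subset (by grind) fun h => (h hx).2 (mem_insert x I))

theorem thetaPlus_nonempty (hr : ∀ e, (r e).1 < (r e).2)
    (hΘ : (thetaPlus r x ∪ thetaMinus r x).Nonempty) (hxb : x ≠ ⊥) (hxt : x ≠ ⊤) :
    (thetaPlus r x).Nonempty := by
  refine (union_nonempty.1 hΘ).elim id fun hm => ?_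
  rw [← ncard_pos] at hm ⊢
  rwa [← ncard_thetaMinus_eq_ncard_thetaPlus hcard hr hxb hxt]

theorem subset_of_setLE_supGen [Finite P] (hr : ∀ e, (r e).1 < (r e).2)
    (hΘ : ∀ x : P, x ≠ ⊥ → x ≠ ⊤ → (thetaPlus r x ∪ thetaMinus r x).Nonempty)
    (hI : IsIdealStar I) (hI' : IsIdealStar I') (h : setLE r (supGen r I) (supGen r I')) :
    I ⊆ I' := by
  by_contra hII'
  obtain ⟨x, hx⟩ := (toFinite (I \ I')).exists_maximal (sdiff_nonempty.2 hII')
  obtain ⟨hxb, hxt⟩ := hI.1 x hx.1.1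
  have hxJ' : x ∉ I' ∪ {⊥} := fun h => h.elim hx.1.2 hxb
  obtain ⟨e, hex : (r e).1 = x⟩ := thetaPlus_nonempty hcard hr (hΘ x hxb hxt) hxb hxt
  have hlt : x < (r e).2 := hex ▸ hr e
  have he : e ∈ supGen r I := by
    refine ⟨Or.inl (hex ▸ hx.1.1), fun h2 => ?_⟩
    have h2I : (r e).2 ∈ I := h2.resolve_right (ne_bot_of_gt hlt)
    have h2I' : (r e).2 ∈ I' := by_contra fun h2I' => hlt.not_ge (hx.2 ⟨h2I, h2I'⟩ hlt.le)
    exact hx.1.2 (hI'.2 x _ h2I' hlt.le hxb)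
  obtain ⟨π, hπ, hle⟩ := h
  have hxπ : x ≤ (r (π e)).1 := hex ▸ (hle e he).fst_le fun e => (hr e).le
  exact hxJ' (hI'.isLowerSet_union_bot hxπ (hπ.mapsTo he).1)

end Supports

theorem stmt_7_general {P E : Type*} [Fintype P] [PartialOrder P] [OrderBot P] [OrderTop P]
    [Fintype E]
    (r : E → P × P) (hr : ∀ e, (r e).1 < (r e).2)
    (q : ℕ)
    (hcard : ∀ I : Set P, IsIdealStar I → (supGen r I).ncard = q)
    (hΘ : ∀ x : P, x ≠ ⊥ → x ≠ ⊤ →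
      ({e : E | (r e).1 = x} ∪ {e : E | (r e).2 = x}).Nonempty) :
    Set.BijOn (supGen r) {I : Set P | IsIdealStar I}
      {S : Set E | ∃ I : Set P, IsIdealStar I ∧ S = supGen r I} ∧
    (∀ I I' : Set P, IsIdealStar I → IsIdealStar I' →
      (I ⊆ I' ↔ setLE r (supGen r I) (supGen r I'))) := by
  have hmono : ∀ I I' : Set P, IsIdealStar I → IsIdealStar I' →
      (I ⊆ I' ↔ setLE r (supGen r I) (supGen r I')) := fun I I' hI hI' =>
    ⟨setLE_supGen_of_subset hcard hr hI hI', subset_of_setLE_supGen hcard hr hΘ hI hI'⟩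
  refine ⟨⟨fun I hI => ⟨I, hI, rfl⟩, fun I hI I' hI' hII' => ?_, fun S ⟨I, hI, hS⟩ => ⟨I, hI, hS.symm⟩⟩,
    hmono⟩
  exact ((hmono I I' hI hI').2 (hII' ▸ setLE_refl _)).antisymm
    ((hmono I' I hI' hI).2 (hII' ▸ setLE_refl _))

/-- Suppose `e⁺ ≺ e⁻` strictly for every `e ∈ E`, there is a positive
integer `q` with `|sup_r(I)| = q` for every ideal `I` of `P*`, and
`Θ⁺(x) ∪ Θ⁻(x) ≠ ∅` for every `x ∈ P*`. Then `sup_r` is a bijection from the ideals of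
`P*` onto `𝒮`, and for any two ideals `I, I′`: `I ⊆ I′ ↔ sup_r(I) ≤ sup_r(I′)`. -/
theorem stmt_7 {P E : Type*} [Fintype P] [PartialOrder P] [OrderBot P] [OrderTop P]
    [Fintype E] (hbt : (⊥ : P) ≠ ⊤)
    (r : E → P × P) (hr : ∀ e, (r e).1 < (r e).2)
    (q : ℕ) (hq : 0 < q)
    (hcard : ∀ I : Set P, IsIdealStar I → (supGen r I).ncard = q)
    (hΘ : ∀ x : P, x ≠ ⊥ → x ≠ ⊤ →
      ({e : E | (r e).1 = x} ∪ {e : E | (r e).2 = x}).Nonempty) :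
    Set.BijOn (supGen r) {I : Set P | IsIdealStar I}
      {S : Set E | ∃ I : Set P, IsIdealStar I ∧ S = supGen r I} ∧
    (∀ I I' : Set P, IsIdealStar I → IsIdealStar I' →
      (I ⊆ I' ↔ setLE r (supGen r I) (supGen r I'))) :=
  stmt_7_general r hr q hcard hΘ
end

section
/- Let r̂ : E → R × R, written r̂(e) = (ê⁺, ê⁻), be a pre-reduction map for 𝒮, i.e.: (a) for all X ∈ ℛ and e ∈ E, ê⁻ ∈ X implies ê⁺ ∈ X; and (b) 𝒮 = { { e ∈ E : ê⁺ ∈ X and ê⁻ ∉ X } : X ∈ ℛ }. Then: (1) Π(ê⁺) ⪯ Π(ê⁻) for every e ∈ E; and (2) 𝒮 = { { e ∈ E : Π(ê⁺) ∈ I ∪ {X_⊥} and Π(ê⁻) ∉ I ∪ {X_⊥} } : I a downward closed subset of (Π*, ⪯) }. -/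
/-!
Every member of `ℛ` lies between `X_⊥` and `X_⊤`, and maximality of the chain makes each block
`X_i \ X_{i−1}` indivisible: if a member `Z` of `ℛ` meets it, then `(Z ∩ X_i) ∪ X_{i−1}` is a
member strictly above `X_{i−1}` and inside `X_i`, hence equal to `X_i`, so `Z` contains the
whole block. Thus every `Z ∈ ℛ` is the union of `X_⊥` and of the blocks it contains, and these
blocks form a down-set of `(Π*, ⪯)`. Conversely, a down-set `I` is recovered from the union of
all members of `ℛ` that only meet blocks of `I ∪ {X_⊥}`: it contains, for each block of `I`, the
least member of `ℛ` containing that block, because the blocks below a block `B` are exactly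
those contained in that least member.
-/

/-- The partial order `⪯` on the partition `Π = Π* ∪ {X_⊥, R \ X_⊤}`:
for blocks `A, B ∈ Π*`, `A ⪯ B` iff every `Z ∈ ℛ` containing `B` also contains `A`;
moreover `X_⊥ ⪯ C ⪯ R \ X_⊤` for every block `C` (and `⪯` is reflexive). -/
def PiLe {R : Type*} (ℛ : Set (Set R)) (Pstar : Set (Set R)) (Xbot Xtop : Set R)
    (A B : Set R) : Prop :=
  A = B ∨ A = Xbot ∨ B = Xtopᶜ ∨
    (A ∈ Pstar ∧ B ∈ Pstar ∧ ∀ Z ∈ ℛ, B ⊆ Z → A ⊆ Z)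

open Set

section

variable {R : Type*} {ℛ : Set (Set R)}

def IsIndivisible (ℛ : Set (Set R)) (D : Set R) : Prop :=
  ∀ Z ∈ ℛ, ∀ x ∈ D, x ∈ Z → D ⊆ Z

theorem isIndivisible_diff_of_maximal (hcup : SupClosed ℛ) (hcap : InfClosed ℛ)
    {A B : Set R} (hA : A ∈ ℛ) (hB : B ∈ ℛ) (hAB : A ⊆ B)
    (hmax : ∀ W ∈ ℛ, ¬(A ⊂ W ∧ W ⊂ B)) : IsIndivisible ℛ (B \ A) := by
  intro Z hZ x hx hxZ
  set W := Z ∩ B ∪ A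
  have hW : W ∈ ℛ := hcup (hcap hZ hB) hA
  have hAW : A ⊂ W :=
    ssubset_of_subset_of_ne subset_union_right fun h => hx.2 (h ▸ Or.inl ⟨hxZ, hx.1⟩)
  have hWB : W = B := by
    by_contra hne
    exact hmax W hW ⟨hAW, ssubset_of_subset_of_ne (union_subset inter_subset_right hAB) hne⟩
  intro y hy
  have hyW : y ∈ W := hWB ▸ hy.1
  exact hyW.resolve_right hy.2 |>.1

theorem exists_isLeast_superset [Finite R] (hcap : InfClosed ℛ) {D W : Set R} (hW : W ∈ ℛ)
    (hDW : D ⊆ W) : ∃ H, IsLeast {Z | Z ∈ ℛ ∧ D ⊆ Z} H :=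
  ⟨⋂₀ {Z | Z ∈ ℛ ∧ D ⊆ Z},
    ⟨hcap.sInf_mem_of_nonempty (toFinite _) ⟨W, hW, hDW⟩ fun _ hZ => hZ.1,
      subset_sInter fun _ hZ => hZ.2⟩,
    fun _ hZ => sInter_subset_of_mem hZ⟩

/-- `P` plays the role of `Π*` and `pi x` that of `Π(x)`. -/
structure IsBlockSystem (ℛ P : Set (Set R)) (Xbot Xtop : Set R) (pi : R → Set R) : Prop where
  bot_mem : Xbot ∈ ℛ
  top_mem : Xtop ∈ ℛ
  bot_subset : ∀ Z ∈ ℛ, Xbot ⊆ Z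
  subset_top : ∀ Z ∈ ℛ, Z ⊆ Xtop
  isIndivisible : ∀ D ∈ P, IsIndivisible ℛ D
  subset_diff : ∀ D ∈ P, D ⊆ Xtop \ Xbot
  mem_pi : ∀ x, x ∈ pi x
  pi_mem : ∀ x, pi x ∈ P ∨ pi x = Xbot ∨ pi x = Xtopᶜ

namespace IsBlockSystem

variable {P : Set (Set R)} {Xbot Xtop : Set R} {pi : R → Set R}

theorem mem_iff (h : IsBlockSystem ℛ P Xbot Xtop pi) {Z : Set R} (hZ : Z ∈ ℛ) (x : R) :
    x ∈ Z ↔ (pi x ∈ P ∧ pi x ⊆ Z) ∨ pi x = Xbot := by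
  constructor
  · intro hxZ
    rcases h.pi_mem x with hP | hbot | htop
    · exact Or.inl ⟨hP, h.isIndivisible _ hP Z hZ x (h.mem_pi x) hxZ⟩
    · exact Or.inr hbot
    · exact ((htop ▸ h.mem_pi x : x ∈ Xtopᶜ) (h.subset_top Z hZ hxZ)).elim
  · rintro (⟨-, hsub⟩ | hbot)
    · exact hsub (h.mem_pi x)
    · exact h.bot_subset Z hZ (hbot ▸ h.mem_pi x)

theorem pi_eq_bot_iff (h : IsBlockSystem ℛ P Xbot Xtop pi) {x : R} : pi x = Xbot ↔ x ∈ Xbot := by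
  refine ⟨fun hbot => hbot ▸ h.mem_pi x, fun hx => ?_⟩
  rcases h.pi_mem x with hP | hbot | htop
  · exact absurd hx (h.subset_diff _ hP (h.mem_pi x)).2
  · exact hbot
  · exact ((htop ▸ h.mem_pi x : x ∈ Xtopᶜ) (h.bot_subset _ h.top_mem hx)).elim

theorem piLe (h : IsBlockSystem ℛ P Xbot Xtop pi) {p q : R} (hpq : ∀ Z ∈ ℛ, q ∈ Z → p ∈ Z) :
    PiLe ℛ P Xbot Xtop (pi p) (pi q) := by
  by_cases hp : pi p = Xbot
  · exact Or.inr (Or.inl hp)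
  have hq : pi q ≠ Xbot := fun hq =>
    hp (h.pi_eq_bot_iff.2 (hpq _ h.bot_mem (h.pi_eq_bot_iff.1 hq)))
  rcases h.pi_mem q with hqP | hq' | hqtop
  · rcases h.pi_mem p with hpP | hp' | hptop
    · refine Or.inr (Or.inr (Or.inr ⟨hpP, hqP, fun Z hZ hqZ => ?_⟩))
      exact ((h.mem_iff hZ p).1 (hpq Z hZ (hqZ (h.mem_pi q)))).resolve_right hp |>.2
    · exact absurd hp' hp
    · have hpX : p ∈ Xtop := hpq _ h.top_mem (h.subset_diff _ hqP (h.mem_pi q)).1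
      exact ((hptop ▸ h.mem_pi p : p ∈ Xtopᶜ) hpX).elim
  · exact absurd hq' hq
  · exact Or.inr (Or.inr (Or.inl hqtop))

theorem exists_lowerSet_of_mem (h : IsBlockSystem ℛ P Xbot Xtop pi) {Z : Set R} (hZ : Z ∈ ℛ) :
    ∃ I ⊆ P, (∀ A B : Set R, B ∈ I → A ∈ P → (∀ W ∈ ℛ, B ⊆ W → A ⊆ W) → A ∈ I) ∧
      ∀ x, x ∈ Z ↔ pi x ∈ I ∪ {Xbot} :=
  ⟨{D | D ∈ P ∧ D ⊆ Z}, fun _ hD => hD.1, fun _ _ hB hA hAB => ⟨hA, hAB Z hZ hB.2⟩,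
    fun x => h.mem_iff hZ x⟩

theorem exists_mem_of_lowerSet [Finite R] (h : IsBlockSystem ℛ P Xbot Xtop pi)
    (hcup : SupClosed ℛ) (hcap : InfClosed ℛ) {I : Set (Set R)} (hIP : I ⊆ P)
    (hI : ∀ A B : Set R, B ∈ I → A ∈ P → (∀ W ∈ ℛ, B ⊆ W → A ⊆ W) → A ∈ I) :
    ∃ Z ∈ ℛ, ∀ x, x ∈ Z ↔ pi x ∈ I ∪ {Xbot} := by
  set 𝒲 := {W | W ∈ ℛ ∧ ∀ y ∈ W, pi y ∈ I ∪ {Xbot}}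
  have hbot𝒲 : Xbot ∈ 𝒲 := ⟨h.bot_mem, fun y hy => Or.inr (h.pi_eq_bot_iff.2 hy)⟩
  refine ⟨⋃₀ 𝒲, hcup.sSup_mem_of_nonempty (toFinite _) ⟨_, hbot𝒲⟩ fun _ hW => hW.1, fun x => ?_⟩
  refine ⟨fun ⟨W, hW, hxW⟩ => hW.2 x hxW, ?_⟩
  rintro (hxI | hxbot)
  · obtain ⟨H, ⟨hH, hxH⟩, hleast⟩ := exists_isLeast_superset hcap h.top_mem
      ((h.subset_diff _ (hIP hxI)).trans sdiff_subset)
    refine ⟨H, ⟨hH, fun y hyH => ?_⟩, hxH (h.mem_pi x)⟩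
    rcases (h.mem_iff hH y).1 hyH with ⟨hyP, hyH'⟩ | hybot
    · exact Or.inl (hI _ _ hxI hyP fun W hW hxW => hyH'.trans (hleast ⟨hW, hxW⟩))
    · exact Or.inr hybot
  · exact ⟨Xbot, hbot𝒲, h.pi_eq_bot_iff.1 hxbot⟩

end IsBlockSystem

end

theorem stmt_9_general {R E : Type*} [Fintype R]
    (ℛ : Set (Set R))
    (hcup : ∀ X ∈ ℛ, ∀ Y ∈ ℛ, X ∪ Y ∈ ℛ)
    (hcap : ∀ X ∈ ℛ, ∀ Y ∈ ℛ, X ∩ Y ∈ ℛ)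
    (Xbot Xtop : Set R) (hXbot : Xbot = ⋂₀ ℛ) (hXtop : Xtop = ⋃₀ ℛ)
    -- a maximal chain `X_⊥ = X₀ ⊊ X₁ ⊊ ⋯ ⊊ X_n = X_⊤` in `ℛ`:
    (n : ℕ) (X : Fin (n + 1) → Set R)
    (hX0 : X 0 = Xbot) (hXlast : X (Fin.last n) = Xtop)
    (hXmem : ∀ i, X i ∈ ℛ)
    (hXchain : ∀ i : Fin n, X i.castSucc ⊂ X i.succ)
    (hXmax : ∀ i : Fin n, ∀ Z ∈ ℛ, ¬(X i.castSucc ⊂ Z ∧ Z ⊂ X i.succ))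
    -- `Π* := { X_i \ X_{i−1} }` and the block map `x ↦ Π(x)`:
    (Pstar : Set (Set R)) (hPstar : Pstar = {B | ∃ i : Fin n, B = X i.succ \ X i.castSucc})
    (pi : R → Set R)
    (hpi : ∀ x : R, pi x ∈ Pstar ∪ {Xbot, Xtopᶜ} ∧ x ∈ pi x)
    -- the pre-reduction map `r̂` for `𝒮`:
    (𝒮 : Set (Set E)) (rh : E → R × R)
    (hpre1 : ∀ Z ∈ ℛ, ∀ e : E, (rh e).2 ∈ Z → (rh e).1 ∈ Z)
    (hpre2 : 𝒮 = {S | ∃ Z ∈ ℛ, S = {e | (rh e).1 ∈ Z ∧ (rh e).2 ∉ Z}}) :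
    (∀ e : E, PiLe ℛ Pstar Xbot Xtop (pi (rh e).1) (pi (rh e).2)) ∧
    𝒮 = {S | ∃ I : Set (Set R), I ⊆ Pstar ∧
      (∀ A B : Set R, B ∈ I → A ∈ Pstar → (∀ Z ∈ ℛ, B ⊆ Z → A ⊆ Z) → A ∈ I) ∧
      S = {e | pi (rh e).1 ∈ I ∪ {Xbot} ∧ pi (rh e).2 ∉ I ∪ {Xbot}}} := by
  have hsup : SupClosed ℛ := fun _ hX _ hY => hcup _ hX _ hY
  have hinf : InfClosed ℛ := fun _ hX _ hY => hcap _ hX _ hY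
  have hbot_subset : ∀ Z ∈ ℛ, Xbot ⊆ Z := fun _ hZ => hXbot ▸ sInter_subset_of_mem hZ
  have hsubset_top : ∀ Z ∈ ℛ, Z ⊆ Xtop := fun _ hZ => hXtop ▸ subset_sUnion_of_mem hZ
  have hB : IsBlockSystem ℛ Pstar Xbot Xtop pi :=
    { bot_mem := hX0 ▸ hXmem 0
      top_mem := hXlast ▸ hXmem (Fin.last n)
      bot_subset := hbot_subset
      subset_top := hsubset_top
      isIndivisible := by
        rw [hPstar]
        rintro _ ⟨i, rfl⟩
        exact isIndivisible_diff_of_maximal hsup hinf (hXmem _) (hXmem _) (hXchain i).subset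
          (hXmax i)
      subset_diff := by
        rw [hPstar]
        rintro _ ⟨i, rfl⟩
        exact sdiff_subset_sdiff (hsubset_top _ (hXmem _)) (hbot_subset _ (hXmem _))
      mem_pi := fun x => (hpi x).2
      pi_mem := fun x => (hpi x).1 }
  refine ⟨fun e => hB.piLe fun Z hZ => hpre1 Z hZ e, ?_⟩
  rw [hpre2]
  ext S
  constructor
  · rintro ⟨Z, hZ, rfl⟩
    obtain ⟨I, hIP, hI, hZI⟩ := hB.exists_lowerSet_of_mem hZ
    exact ⟨I, hIP, hI, by simp only [hZI]⟩
  · rintro ⟨I, hIP, hI, rfl⟩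
    obtain ⟨Z, hZ, hZI⟩ := hB.exists_mem_of_lowerSet hsup hinf hIP hI
    exact ⟨Z, hZ, by simp only [hZI]⟩

/-- Let `r̂ : E → R × R` be a pre-reduction map for `𝒮` w.r.t. the ring
family `ℛ`. Then (1) `Π(ê⁺) ⪯ Π(ê⁻)` for every `e ∈ E`, and (2) `𝒮` is the family of
sets `{ e : Π(ê⁺) ∈ I ∪ {X_⊥}, Π(ê⁻) ∉ I ∪ {X_⊥} }` over all downward closed subsets
`I` of `(Π*, ⪯)`. -/
theorem stmt_9 {R E : Type*} [Fintype R] [Fintype E]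
    (ℛ : Set (Set R)) (hRne : ℛ.Nonempty)
    (hcup : ∀ X ∈ ℛ, ∀ Y ∈ ℛ, X ∪ Y ∈ ℛ)
    (hcap : ∀ X ∈ ℛ, ∀ Y ∈ ℛ, X ∩ Y ∈ ℛ)
    (Xbot Xtop : Set R) (hXbot : Xbot = ⋂₀ ℛ) (hXtop : Xtop = ⋃₀ ℛ)
    (hbotne : Xbot.Nonempty) (htopproper : Xtop ≠ Set.univ)
    -- a maximal chain `X_⊥ = X₀ ⊊ X₁ ⊊ ⋯ ⊊ X_n = X_⊤` in `ℛ`: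
    (n : ℕ) (X : Fin (n + 1) → Set R)
    (hX0 : X 0 = Xbot) (hXlast : X (Fin.last n) = Xtop)
    (hXmem : ∀ i, X i ∈ ℛ)
    (hXchain : ∀ i : Fin n, X i.castSucc ⊂ X i.succ)
    (hXmax : ∀ i : Fin n, ∀ Z ∈ ℛ, ¬(X i.castSucc ⊂ Z ∧ Z ⊂ X i.succ))
    -- `Π* := { X_i \ X_{i−1} }` and the block map `x ↦ Π(x)`:
    (Pstar : Set (Set R)) (hPstar : Pstar = {B | ∃ i : Fin n, B = X i.succ \ X i.castSucc})
    (pi : R → Set R)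
    (hpi : ∀ x : R, pi x ∈ Pstar ∪ {Xbot, Xtopᶜ} ∧ x ∈ pi x)
    -- the pre-reduction map `r̂` for `𝒮`:
    (𝒮 : Set (Set E)) (rh : E → R × R)
    (hpre1 : ∀ Z ∈ ℛ, ∀ e : E, (rh e).2 ∈ Z → (rh e).1 ∈ Z)
    (hpre2 : 𝒮 = {S | ∃ Z ∈ ℛ, S = {e | (rh e).1 ∈ Z ∧ (rh e).2 ∉ Z}}) :
    (∀ e : E, PiLe ℛ Pstar Xbot Xtop (pi (rh e).1) (pi (rh e).2)) ∧
    𝒮 = {S | ∃ I : Set (Set R), I ⊆ Pstar ∧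
      (∀ A B : Set R, B ∈ I → A ∈ Pstar → (∀ Z ∈ ℛ, B ⊆ Z → A ⊆ Z) → A ∈ I) ∧
      S = {e | pi (rh e).1 ∈ I ∪ {Xbot} ∧ pi (rh e).2 ∉ I ∪ {Xbot}}} :=
  stmt_9_general ℛ hcup hcap Xbot Xtop hXbot hXtop n X hX0 hXlast hXmem hXchain hXmax Pstar hPstar
    pi hpi 𝒮 rh hpre1 hpre2
end

section
/- Let φ(x) = x(x−1)/2 (binomial coefficient C(x,2), with value 0 for x ≤ 1) and let Â₃ := { (uⁱ, vʲ) : (u,v) ∈ A, w((u,v)) > 0, 1 ≤ i < j ≤ k } with capacity c((uⁱ,vʲ)) := w((u,v)). Then: for every X ⊆ V̂ with s ∈ X and t ∉ X and δ(X) < M there exists a k-potential p of G with H(p) = δ(X); and conversely, for every k-potential p of G there exists X ⊆ V̂ with s ∈ X, t ∉ X, and δ(X) = H(p). -/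
/-- The vertex set `V̂` of the extended digraph: `k` copies `vⁱ` of each vertex `v ∈ V`
(encoded `Sum.inl (v, i)`), plus the source `s := Sum.inr true` and the sink
`t := Sum.inr false`. -/
abbrev VhatT (V : Type*) (k : ℕ) : Type _ := (V × Fin k) ⊕ Bool

/-- A `k`-potential of the DAG `G = (V, A)` with source `⊤ = top` and sink `⊥ = bot`:
`p(⊥) = k`, `p(⊤) = 0`, `0 ≤ p(v) ≤ k`, and `p(u) ≤ p(v)` for every arc `(u, v)`. -/
def IsKPotentialG {V : Type*} (A : Finset (V × V)) (bot top : V) (k : ℕ) (p : V → ℤ) : Prop :=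
  p bot = k ∧ p top = 0 ∧ (∀ v, 0 ≤ p v ∧ p v ≤ k) ∧ ∀ a ∈ A, p a.1 ≤ p a.2

/-- The total capacity of an arc of `Ĝ` for the reduction of {\sc Sum-k-Diverse}
(`φ(x) = C(x,2)`): the arcs `Â₁ = {(vⁱ, v^{i+1})}` and
`Â₂ = {(vⁱ, uⁱ) : (u,v) ∈ A} ∪ {(⊥ⁱ, t)} ∪ {(s, ⊤ⁱ)}` have capacity `M`, and the arcs
`Â₃ = {(uⁱ, vʲ) : (u,v) ∈ A, w((u,v)) > 0, i < j}` have capacity `w((u,v))`. -/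
def cap10 {V : Type*} [DecidableEq V] (A : Finset (V × V)) (w : V × V → ℕ)
    (bot top : V) (k : ℕ) (M : ℤ) : VhatT V k → VhatT V k → ℤ
  | Sum.inl (a, i), Sum.inl (b, j) =>
      (if a = b ∧ (j : ℕ) = (i : ℕ) + 1 then M else 0) +
      (if (b, a) ∈ A ∧ i = j then M else 0) +
      (if (a, b) ∈ A ∧ 0 < w (a, b) ∧ (i : ℕ) < (j : ℕ) then (w (a, b) : ℤ) else 0)
  | Sum.inr true, Sum.inl (v, _) => if v = top then M else 0
  | Sum.inl (v, _), Sum.inr false => if v = bot then M else 0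
  | _, _ => 0

/-- `δ(X)`: the sum of the capacities of all arcs of `Ĝ` from `X` to `V̂ \ X`. -/
def cutVal {V : Type*} [Fintype V] [DecidableEq V] (k : ℕ)
    (c : VhatT V k → VhatT V k → ℤ) (X : Finset (VhatT V k)) : ℤ :=
  ∑ x : VhatT V k, ∑ y : VhatT V k, if x ∈ X ∧ y ∉ X then c x y else 0



open Finset

/-- Count of an interval inside `range k`. -/
lemma countIco (a b k : ℕ) (hb : b ≤ k) :
    (∑ i ∈ range k, if a ≤ i ∧ i < b then 1 else 0) = b - a := by
  rw [Finset.sum_boole]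
  have : (range k).filter (fun i => a ≤ i ∧ i < b) = Finset.Ico a b := by
    ext x; simp only [mem_filter, mem_range, Finset.mem_Ico]; omega
  rw [this, Nat.card_Ico]
  simp

lemma countPairs (a b k : ℕ) (hb : b ≤ k) :
    (∑ i ∈ range k, ∑ j ∈ range k, if a ≤ i ∧ j < b ∧ i < j then 1 else 0)
      = (b - a).choose 2 := by
  induction b with
  | zero => simp
  | succ b ih =>
    have hbk : b < k := hb
    have hsplit : ∀ i j : ℕ, (if a ≤ i ∧ j < b + 1 ∧ i < j then (1:ℕ) else 0)
        = (if a ≤ i ∧ j < b ∧ i < j then 1 else 0)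
          + (if j = b then (if a ≤ i ∧ i < b then 1 else 0) else 0) := by
      intro i j; split_ifs <;> omega
    simp_rw [hsplit, Finset.sum_add_distrib]
    rw [ih (by omega)]
    have h2 : ∀ i, (∑ j ∈ range k, if j = b then (if a ≤ i ∧ i < b then (1:ℕ) else 0) else 0)
        = (if a ≤ i ∧ i < b then 1 else 0) := by
      intro i
      rw [Finset.sum_ite_eq' (range k) b (fun _ => if a ≤ i ∧ i < b then (1:ℕ) else 0),
        if_pos (Finset.mem_range.mpr hbk)]
    simp_rw [h2]
    rw [countIco a b k (by omega)]
    rcases le_or_gt a b with h | h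
    · have : b + 1 - a = (b - a) + 1 := by omega
      rw [this, Nat.choose_succ_succ (b - a) 1, Nat.choose_one_right, Nat.add_comm]
    · have h1 : b - a = 0 := by omega
      have h2 : b + 1 - a ≤ 1 := by omega
      interval_cases h3 : (b + 1 - a) <;> simp [h1]

lemma sumPairs (a b k : ℕ) (hb : b ≤ k) (c : ℤ) :
    (∑ i : Fin k, ∑ j : Fin k,
        if a ≤ (i:ℕ) ∧ (j:ℕ) < b ∧ (i:ℕ) < (j:ℕ) then c else 0)
      = c * ((b - a).choose 2 : ℤ) := by
  have h : ∀ (P : Prop) [Decidable P], (if P then c else 0) = c * (if P then 1 else 0) := by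
    intro P _; split <;> ring
  simp_rw [h, ← Finset.mul_sum]
  congr 1
  rw [← countPairs a b k hb]
  rw [Fin.sum_univ_eq_sum_range (fun i => ∑ j : Fin k,
    if a ≤ i ∧ (j:ℕ) < b ∧ i < (j:ℕ) then (1:ℤ) else 0)]
  push_cast
  exact Finset.sum_congr rfl fun i _ =>
    Fin.sum_univ_eq_sum_range (fun j => if a ≤ i ∧ j < b ∧ i < j then (1:ℤ) else 0) k

lemma phiNat (a b : ℕ) :
    (if ((b:ℤ) - a) ≤ 1 then 0 else ((b:ℤ) - a) * (((b:ℤ) - a) - 1) / 2)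
      = ((b - a).choose 2 : ℤ) := by
  rcases le_or_gt b (a + 1) with h | h
  · rw [if_pos (by omega)]
    have : b - a ≤ 1 := by omega
    interval_cases h2 : (b - a) <;> simp
  · rw [if_neg (by omega)]
    have h1 : ((b:ℤ) - a) = ((b - a : ℕ) : ℤ) := by omega
    rw [h1]
    have h2 : ((b - a : ℕ) : ℤ) - 1 = ((b - a - 1 : ℕ) : ℤ) := by omega
    rw [h2, ← Int.natCast_mul, Nat.choose_two_right, Int.natCast_div]
    norm_num

/-- A downward-closed subset of `Fin k` is an initial segment. -/
lemma mem_iff_lt_card {k : ℕ} (S : Finset (Fin k))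
    (hdc : ∀ i j : Fin k, j ∈ S → i ≤ j → i ∈ S) (i : Fin k) :
    i ∈ S ↔ (i : ℕ) < S.card := by
  constructor
  · intro hi
    have hsub : Finset.Iic i ⊆ S := fun j hj => hdc j i hi (Finset.mem_Iic.mp hj)
    have := Finset.card_le_card hsub
    rw [Fin.card_Iic] at this
    omega
  · intro h
    by_contra hi
    have hsub : S ⊆ Finset.Iio i := fun j hj =>
      Finset.mem_Iio.2 (lt_of_not_ge fun hle => hi (hdc i j hj hle))
    have := Finset.card_le_card hsub
    rw [Fin.card_Iio] at this
    omega

section Main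

variable {V : Type*} [Fintype V] [DecidableEq V]

/-- The simplified crossing-capacity function for a "staircase" cut given by `n`. -/
def G10 (A : Finset (V × V)) (w : V × V → ℕ) (k : ℕ) (n : V → ℕ) :
    VhatT V k → VhatT V k → ℤ
  | Sum.inl (u, i), Sum.inl (v, j) =>
      if (u, v) ∈ A ∧ n u ≤ (i:ℕ) ∧ (j:ℕ) < n v ∧ (i:ℕ) < (j:ℕ) then (w (u, v) : ℤ) else 0
  | _, _ => 0

lemma cutEq (A : Finset (V × V)) (w : V × V → ℕ) (bot top : V) (k : ℕ) (M : ℤ)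
    (n : V → ℕ) (hnk : ∀ v, n v ≤ k) (htop : n top = 0) (hbot : n bot = k)
    (hmono : ∀ a ∈ A, n a.1 ≤ n a.2)
    (X : Finset (VhatT V k))
    (hmem : ∀ (v : V) (i : Fin k), (Sum.inl (v, i) : VhatT V k) ∈ X ↔ n v ≤ (i:ℕ))
    (hs : (Sum.inr true : VhatT V k) ∈ X) (ht : (Sum.inr false : VhatT V k) ∉ X) :
    cutVal k (cap10 A w bot top k M) X
      = ∑ a ∈ A, (w a : ℤ) * ((n a.2 - n a.1).choose 2 : ℤ) := by
  have hpt : ∀ x y : VhatT V k,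
      (if x ∈ X ∧ y ∉ X then cap10 A w bot top k M x y else 0) = G10 A w k n x y := by
    rintro (⟨u, i⟩ | bx) (⟨v, j⟩ | by')
    · by_cases hx : (Sum.inl (u, i) : VhatT V k) ∈ X
      · by_cases hy : (Sum.inl (v, j) : VhatT V k) ∈ X
        · rw [if_neg (by tauto)]
          rw [hmem] at hy
          simp only [G10]
          rw [if_neg (by rintro ⟨-, -, h, -⟩; omega)]
        · rw [if_pos ⟨hx, hy⟩]
          rw [hmem] at hx hy
          push_neg at hy
          simp only [cap10, G10]
          have t1 : (if u = v ∧ (j : ℕ) = (i : ℕ) + 1 then M else 0) = 0 := by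
            rw [if_neg]; rintro ⟨rfl, h⟩; omega
          have t2 : (if (v, u) ∈ A ∧ i = j then M else 0) = 0 := by
            rw [if_neg]; rintro ⟨hvu, rfl⟩
            have := hmono (v, u) hvu
            simp only at this
            omega
          rw [t1, t2, zero_add, zero_add]
          by_cases hA : (u, v) ∈ A
          · by_cases hij : (i : ℕ) < (j : ℕ)
            · by_cases hw : 0 < w (u, v)
              · rw [if_pos ⟨hA, hw, hij⟩, if_pos ⟨hA, hx, hy, hij⟩]
              · have hw0 : w (u, v) = 0 := by omega
                rw [if_neg (by tauto)]
                split <;> simp [hw0]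
            · rw [if_neg (by tauto), if_neg (by tauto)]
          · rw [if_neg (by tauto), if_neg (by tauto)]
      · rw [if_neg (by tauto)]
        rw [hmem] at hx
        simp only [G10]
        rw [if_neg (by rintro ⟨-, h, -⟩; omega)]
    · -- y = inr b
      cases by'
      · -- y = inr false = t
        by_cases hx : (Sum.inl (u, i) : VhatT V k) ∈ X
        · rw [if_pos ⟨hx, ht⟩]
          rw [hmem] at hx
          simp only [cap10, G10]
          rw [if_neg]
          rintro rfl
          have := i.isLt
          omega
        · rw [if_neg (by tauto)]; rfl
      · -- y = inr true
        rw [if_neg (by rintro ⟨-, h⟩; exact h hs)]; rfl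
    · -- x = inr b, y = inl
      cases bx
      · rw [if_neg (by rintro ⟨h, -⟩; exact ht h)]; rfl
      · by_cases hy : (Sum.inl (v, j) : VhatT V k) ∈ X
        · rw [if_neg (by tauto)]; rfl
        · rw [if_pos ⟨hs, hy⟩]
          rw [hmem] at hy
          simp only [cap10, G10]
          rw [if_neg]
          rintro rfl
          omega
    · -- both inr
      cases bx
      · rw [if_neg (by rintro ⟨h, -⟩; exact ht h)]; rfl
      · cases by'
        · rw [if_pos ⟨hs, ht⟩]; rfl
        · rw [if_neg (by tauto)]; rfl
  unfold cutVal
  simp_rw [hpt]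
  rw [Fintype.sum_sum_type]
  have hz : (∑ b : Bool, ∑ y : VhatT V k, G10 A w k n (Sum.inr b) y) = 0 := by
    apply Finset.sum_eq_zero; intro b _
    apply Finset.sum_eq_zero; intro y _
    cases b <;> rcases y with (⟨v, j⟩ | b') <;> rfl
  rw [hz, add_zero]
  have hinner : ∀ q : V × Fin k,
      (∑ y : VhatT V k, G10 A w k n (Sum.inl q) y)
        = ∑ r : V × Fin k, G10 A w k n (Sum.inl q) (Sum.inl r) := by
    intro q
    rw [Fintype.sum_sum_type]
    have : (∑ b : Bool, G10 A w k n (Sum.inl q) (Sum.inr b)) = 0 := by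
      apply Finset.sum_eq_zero; intro b _
      rcases q with ⟨u, i⟩; cases b <;> rfl
    rw [this, add_zero]
  simp_rw [hinner]
  -- now a sum over (V × Fin k) × (V × Fin k)
  rw [Fintype.sum_prod_type]
  simp_rw [Fintype.sum_prod_type]
  have hswap : (∑ u : V, ∑ i : Fin k, ∑ v : V, ∑ j : Fin k,
        G10 A w k n (Sum.inl (u, i)) (Sum.inl (v, j)))
      = ∑ u : V, ∑ v : V, ∑ i : Fin k, ∑ j : Fin k,
        G10 A w k n (Sum.inl (u, i)) (Sum.inl (v, j)) := by
    exact Finset.sum_congr rfl fun u _ => Finset.sum_comm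
  rw [hswap]
  have hinner2 : ∀ u v : V,
      (∑ i : Fin k, ∑ j : Fin k, G10 A w k n (Sum.inl (u, i)) (Sum.inl (v, j)))
        = if (u, v) ∈ A then (w (u, v) : ℤ) * ((n v - n u).choose 2 : ℤ) else 0 := by
    intro u v
    by_cases hA : (u, v) ∈ A
    · simp only [G10, hA, true_and, if_pos]
      exact sumPairs (n u) (n v) k (hnk v) _
    · simp [G10, hA]
  simp_rw [hinner2]
  rw [← Finset.sum_product', Finset.univ_product_univ]
  simp only [Prod.mk.eta]
  rw [Finset.sum_ite_mem, Finset.univ_inter]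

end Main

lemma ite_nonneg' {P : Prop} [Decidable P] {c : ℤ} (h : 0 ≤ c) : 0 ≤ if P then c else 0 := by
  split <;> simp [h]

section Cap
variable {V : Type*} [Fintype V] [DecidableEq V]

lemma capNonneg (A : Finset (V × V)) (w : V × V → ℕ) (bot top : V) (k : ℕ) (M : ℤ)
    (hM : 0 ≤ M) : ∀ x y : VhatT V k, 0 ≤ cap10 A w bot top k M x y := by
  rintro (⟨a, i⟩ | (_ | _)) (⟨b, j⟩ | (_ | _)) <;>
    simp only [cap10] <;>
    first
      | exact le_refl 0
      | exact ite_nonneg' hM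
      | exact add_nonneg (add_nonneg (ite_nonneg' hM) (ite_nonneg' hM))
          (ite_nonneg' (Int.natCast_nonneg _))

lemma capBound (A : Finset (V × V)) (w : V × V → ℕ) (bot top : V) (k : ℕ) (M : ℤ)
    (hM : 0 ≤ M) (X : Finset (VhatT V k))
    (hcut : cutVal k (cap10 A w bot top k M) X < M) :
    ∀ x y : VhatT V k, x ∈ X → y ∉ X → cap10 A w bot top k M x y < M := by
  intro x y hx hy
  have hnn : ∀ x' y' : VhatT V k,
      0 ≤ (if x' ∈ X ∧ y' ∉ X then cap10 A w bot top k M x' y' else 0) :=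
    fun x' y' => by split; exacts [capNonneg A w bot top k M hM x' y', le_refl 0]
  have h1 : ∀ x' : VhatT V k,
      0 ≤ ∑ y' : VhatT V k, (if x' ∈ X ∧ y' ∉ X then cap10 A w bot top k M x' y' else 0) :=
    fun x' => Finset.sum_nonneg fun y' _ => hnn x' y'
  have h2 : (∑ y' : VhatT V k, if x ∈ X ∧ y' ∉ X then cap10 A w bot top k M x y' else 0)
      ≤ cutVal k (cap10 A w bot top k M) X :=
    Finset.single_le_sum (fun x' _ => h1 x') (Finset.mem_univ x)
  have h3 : (if x ∈ X ∧ y ∉ X then cap10 A w bot top k M x y else 0)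
      ≤ ∑ y' : VhatT V k, (if x ∈ X ∧ y' ∉ X then cap10 A w bot top k M x y' else 0) :=
    Finset.single_le_sum (fun y' _ => hnn x y') (Finset.mem_univ y)
  rw [if_pos ⟨hx, hy⟩] at h3
  linarith

end Cap
/-- With `φ(x) = C(x,2)` and `Â₃ = {(uⁱ,vʲ) : (u,v) ∈ A, w > 0, i < j}`
of capacity `w((u,v))`: every `X ⊆ V̂` with `s ∈ X`, `t ∉ X` and `δ(X) < M` yields a
`k`-potential `p` with `H(p) = δ(X)`, and conversely every `k`-potential `p` yields such
an `X` with `δ(X) = H(p)`. -/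
theorem stmt_10 {V : Type*} [Fintype V] [DecidableEq V]
    (A : Finset (V × V)) (w : V × V → ℕ) (top bot : V) (htb : top ≠ bot)
    (hacyc : ∀ v : V, ¬ Relation.TransGen (fun x y => (x, y) ∈ A) v v)
    (hsrc : ∀ u : V, (u, top) ∉ A)
    (hsrcu : ∀ v : V, (∀ u : V, (u, v) ∉ A) → v = top)
    (hsink : ∀ u : V, (bot, u) ∉ A)
    (hsinku : ∀ v : V, (∀ u : V, (v, u) ∉ A) → v = bot)
    (k : ℕ) (hk : 0 < k) (M : ℤ) (hMpos : 0 < M)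
    (φ : ℤ → ℤ) (hφ : φ = fun x => if x ≤ 1 then 0 else x * (x - 1) / 2)
    (hM : ∀ p : V → ℤ, IsKPotentialG A bot top k p →
      (∑ a ∈ A, (w a : ℤ) * φ (p a.2 - p a.1)) < M) :
    (∀ X : Finset (VhatT V k),
      (Sum.inr true : VhatT V k) ∈ X → (Sum.inr false : VhatT V k) ∉ X →
      cutVal k (cap10 A w bot top k M) X < M →
      ∃ p : V → ℤ, IsKPotentialG A bot top k p ∧
        (∑ a ∈ A, (w a : ℤ) * φ (p a.2 - p a.1)) = cutVal k (cap10 A w bot top k M) X) ∧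
    (∀ p : V → ℤ, IsKPotentialG A bot top k p →
      ∃ X : Finset (VhatT V k),
        (Sum.inr true : VhatT V k) ∈ X ∧ (Sum.inr false : VhatT V k) ∉ X ∧
        cutVal k (cap10 A w bot top k M) X = ∑ a ∈ A, (w a : ℤ) * φ (p a.2 - p a.1)) := by
  constructor
  · -- direction 1: cut → potential
    intro X hs ht hcut
    have hbd := capBound A w bot top k M hMpos.le X hcut
    -- chains are upward closed in X
    have hstep : ∀ (v : V) (i j : Fin k), (j : ℕ) = (i : ℕ) + 1 →
        (Sum.inl (v, i) : VhatT V k) ∈ X → (Sum.inl (v, j) : VhatT V k) ∈ X := by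
      intro v i j hij hi
      by_contra hj
      have h := hbd _ _ hi hj
      have hge : M ≤ cap10 A w bot top k M (Sum.inl (v, i)) (Sum.inl (v, j)) := by
        show M ≤ (if v = v ∧ (j : ℕ) = (i : ℕ) + 1 then M else 0) +
          (if (v, v) ∈ A ∧ i = j then M else 0) +
          (if (v, v) ∈ A ∧ 0 < w (v, v) ∧ (i : ℕ) < (j : ℕ) then (w (v, v) : ℤ) else 0)
        rw [if_pos ⟨rfl, hij⟩]
        have a2 : (0:ℤ) ≤ if (v, v) ∈ A ∧ i = j then M else 0 := ite_nonneg' hMpos.le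
        have a3 : (0:ℤ) ≤ if (v, v) ∈ A ∧ 0 < w (v, v) ∧ (i:ℕ) < (j:ℕ)
            then (w (v, v) : ℤ) else 0 := ite_nonneg' (Int.natCast_nonneg _)
        linarith
      linarith
    have hup : ∀ (v : V) (i j : Fin k), i ≤ j →
        (Sum.inl (v, i) : VhatT V k) ∈ X → (Sum.inl (v, j) : VhatT V k) ∈ X := by
      intro v i j hij hi
      have key : ∀ m : ℕ, ∀ hm : m < k, (i : ℕ) ≤ m →
          (Sum.inl (v, (⟨m, hm⟩ : Fin k)) : VhatT V k) ∈ X := by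
        intro m
        induction m with
        | zero =>
          intro hm h0
          have : i = (⟨0, hm⟩ : Fin k) := Fin.ext (show (i : ℕ) = 0 by omega)
          rwa [← this]
        | succ m ih =>
          intro hm hle
          rcases Nat.lt_or_ge m (i : ℕ) with h | h
          · have : i = (⟨m + 1, hm⟩ : Fin k) := Fin.ext (show (i : ℕ) = m + 1 by omega)
            rwa [← this]
          · exact hstep v ⟨m, by omega⟩ ⟨m + 1, hm⟩ rfl (ih (by omega) h)
      have hj := key (j : ℕ) j.isLt hij
      rwa [Fin.eta] at hj
    set S : V → Finset (Fin k) :=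
      fun v => Finset.univ.filter (fun i => (Sum.inl (v, i) : VhatT V k) ∉ X) with hS
    set n : V → ℕ := fun v => (S v).card with hn
    have hSmem : ∀ (v : V) (i : Fin k), i ∈ S v ↔ (Sum.inl (v, i) : VhatT V k) ∉ X := by
      intro v i; simp [hS]
    have hmemX : ∀ (v : V) (i : Fin k),
        (Sum.inl (v, i) : VhatT V k) ∈ X ↔ n v ≤ (i : ℕ) := by
      intro v i
      have hdc : ∀ i j : Fin k, j ∈ S v → i ≤ j → i ∈ S v := by
        intro i j hjS hij
        rw [hSmem] at hjS ⊢
        intro hiX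
        exact hjS (hup v i j hij hiX)
      have hiff := mem_iff_lt_card (S v) hdc i
      rw [hSmem] at hiff
      have hcard : n v = (S v).card := rfl
      constructor
      · intro hx
        by_contra hlt
        exact (hiff.mpr (by omega)) hx
      · intro hle
        by_contra hx
        have := hiff.mp hx
        omega
    have htopmem : ∀ i : Fin k, (Sum.inl (top, i) : VhatT V k) ∈ X := by
      intro i
      by_contra hi
      have h := hbd _ _ hs hi
      have : cap10 A w bot top k M (Sum.inr true) (Sum.inl (top, i)) = M := by
        show (if top = top then M else 0) = M
        rw [if_pos rfl]
      omega
    have hbotnot : ∀ i : Fin k, (Sum.inl (bot, i) : VhatT V k) ∉ X := by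
      intro i hi
      have h := hbd _ _ hi ht
      have : cap10 A w bot top k M (Sum.inl (bot, i)) (Sum.inr false) = M := by
        show (if bot = bot then M else 0) = M
        rw [if_pos rfl]
      omega
    have harc : ∀ (u v : V), (u, v) ∈ A → ∀ i : Fin k,
        (Sum.inl (v, i) : VhatT V k) ∈ X → (Sum.inl (u, i) : VhatT V k) ∈ X := by
      intro u v hA i hvi
      by_contra hui
      have h := hbd _ _ hvi hui
      have hge : M ≤ cap10 A w bot top k M (Sum.inl (v, i)) (Sum.inl (u, i)) := by
        show M ≤ (if v = u ∧ (i : ℕ) = (i : ℕ) + 1 then M else 0) +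
          (if (u, v) ∈ A ∧ i = i then M else 0) +
          (if (v, u) ∈ A ∧ 0 < w (v, u) ∧ (i : ℕ) < (i : ℕ) then (w (v, u) : ℤ) else 0)
        have t2 : (if (u, v) ∈ A ∧ i = i then M else 0) = M := if_pos ⟨hA, rfl⟩
        rw [t2]
        have a1 : (0:ℤ) ≤ if v = u ∧ (i:ℕ) = (i:ℕ) + 1 then M else 0 := ite_nonneg' hMpos.le
        have a3 : (0:ℤ) ≤ if (v, u) ∈ A ∧ 0 < w (v, u) ∧ (i:ℕ) < (i:ℕ)
            then (w (v, u) : ℤ) else 0 := ite_nonneg' (Int.natCast_nonneg _)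
        linarith
      linarith
    have htop0 : n top = 0 := by
      have : S top = ∅ := by
        apply Finset.filter_eq_empty_iff.mpr
        intro i _
        simp only [not_not]
        exact htopmem i
      show (S top).card = 0
      rw [this, Finset.card_empty]
    have hbotk : n bot = k := by
      have : S bot = Finset.univ := by
        apply Finset.filter_eq_self.mpr
        intro i _
        exact hbotnot i
      show (S bot).card = k
      rw [this, Finset.card_univ, Fintype.card_fin]
    have hnk : ∀ v, n v ≤ k := by
      intro v
      have := Finset.card_le_card (Finset.filter_subset
        (fun i => (Sum.inl (v, i) : VhatT V k) ∉ X) Finset.univ)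
      simpa [hn, hS, Fintype.card_fin] using this
    have hmono : ∀ a ∈ A, n a.1 ≤ n a.2 := by
      rintro ⟨u, v⟩ hA
      apply Finset.card_le_card
      intro i hi
      rw [hSmem] at hi ⊢
      intro hvi
      exact hi (harc u v hA i hvi)
    refine ⟨fun v => (n v : ℤ), ⟨by show ((n bot : ℕ) : ℤ) = (k : ℤ); rw [hbotk],
      by show ((n top : ℕ) : ℤ) = 0; rw [htop0]; rfl,
      fun v => ⟨Int.natCast_nonneg _,
        by show ((n v : ℕ) : ℤ) ≤ (k : ℤ); exact_mod_cast hnk v⟩,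
      fun a ha => by show ((n a.1 : ℕ) : ℤ) ≤ ((n a.2 : ℕ) : ℤ)
                     exact_mod_cast hmono a ha⟩, ?_⟩
    rw [cutEq A w bot top k M n hnk htop0 hbotk hmono X hmemX hs ht]
    apply Finset.sum_congr rfl
    intro a _
    congr 1
    rw [hφ]
    exact phiNat (n a.1) (n a.2)
  · -- direction 2: potential → cut
    intro p hp
    obtain ⟨hpbot, hptop, hpbd, hpmono⟩ := hp
    set n : V → ℕ := fun v => (p v).toNat with hn
    have hcast : ∀ v, (n v : ℤ) = p v := by
      intro v; simp only [hn]; exact Int.toNat_of_nonneg (hpbd v).1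
    have hnk : ∀ v, n v ≤ k := by
      intro v; have h1 := (hpbd v).1; have h2 := (hpbd v).2; simp only [hn]; omega
    have htop0 : n top = 0 := by have := hptop; simp only [hn]; omega
    have hbotk : n bot = k := by have := hpbot; simp only [hn]; omega
    have hmono : ∀ a ∈ A, n a.1 ≤ n a.2 := by
      intro a ha
      have h1 := hpmono a ha
      have h2 := (hpbd a.1).1
      have h3 := (hpbd a.2).1
      simp only [hn]
      omega
    refine ⟨(Finset.univ.filter (fun q : V × Fin k => n q.1 ≤ (q.2 : ℕ))).image Sum.inl
      ∪ {Sum.inr true}, ?_, ?_, ?_⟩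
    · simp
    · simp
    · rw [cutEq A w bot top k M n hnk htop0 hbotk hmono _ ?_ (by simp) (by simp)]
      · apply Finset.sum_congr rfl
        intro a _
        congr 1
        rw [hφ, ← hcast a.1, ← hcast a.2]
        exact (phiNat (n a.1) (n a.2)).symm
      · intro v i
        simp
end

section
/- Let f be a maximum s-t flow of G with unit capacities. Then: (i) for every X ∈ ℛ_st and every arc a = (u,v) ∈ A with f(a) = 1 and v ∈ X, also u ∈ X; and (ii) the set of all minimum s-t cuts of G equals { { a = (u,v) ∈ A : f(a) = 1, u ∈ X, v ∉ X } : X ∈ ℛ_st }. -/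
/-- An `s`-`t` cut: a set `C ⊆ A` of arcs such that the digraph `(V, A \ C)` has no
directed path from `s` to `t`. -/
def IsSTCut {V : Type*} (A : Finset (V × V)) (s t : V) (C : Finset (V × V)) : Prop :=
  C ⊆ A ∧ ¬ Relation.ReflTransGen (fun u v => (u, v) ∈ A ∧ (u, v) ∉ C) s t

/-- A minimum `s`-`t` cut: an `s`-`t` cut of minimum cardinality. -/
def IsMinSTCut {V : Type*} (A : Finset (V × V)) (s t : V) (C : Finset (V × V)) : Prop :=
  IsSTCut A s t C ∧ ∀ C' : Finset (V × V), IsSTCut A s t C' → C.card ≤ C'.card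

/-- `Δ⁺(X)`: the set of arcs from `X` to `V \ X`. -/
def outArcs {V : Type*} [DecidableEq V] (A : Finset (V × V)) (X : Finset V) :
    Finset (V × V) :=
  A.filter fun a => a.1 ∈ X ∧ a.2 ∉ X

/-- `ℛ_st`: the family of `X ⊆ V` with `s ∈ X`, `t ∉ X`, whose outgoing arcs form a
minimum `s`-`t` cut. -/
def Rst {V : Type*} [DecidableEq V] (A : Finset (V × V)) (s t : V) : Set (Finset V) :=
  {X | s ∈ X ∧ t ∉ X ∧ IsMinSTCut A s t (outArcs A X)}

/-- An `s`-`t` flow with unit capacities. -/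
def IsFlow {V : Type*} [DecidableEq V] (A : Finset (V × V)) (s t : V) (f : V × V → ℤ) :
    Prop :=
  (∀ a ∈ A, 0 ≤ f a ∧ f a ≤ 1) ∧
  ∀ v : V, v ≠ s → v ≠ t →
    (∑ a ∈ A.filter fun a => a.1 = v, f a) = ∑ a ∈ A.filter fun a => a.2 = v, f a

/-- The value of a flow: flow out of `s` minus flow into `s`. -/
def flowValue {V : Type*} [DecidableEq V] (A : Finset (V × V)) (s : V) (f : V × V → ℤ) :
    ℤ :=
  (∑ a ∈ A.filter fun a => a.1 = s, f a) - ∑ a ∈ A.filter fun a => a.2 = s, f a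

/-- A maximum `s`-`t` flow. -/
def IsMaxFlow {V : Type*} [DecidableEq V] (A : Finset (V × V)) (s t : V) (f : V × V → ℤ) :
    Prop :=
  IsFlow A s t f ∧ ∀ g : V × V → ℤ, IsFlow A s t g → flowValue A s g ≤ flowValue A s f


/-!
Summing conservation over a set `X` with `s ∈ X`, `t ∉ X` writes the value of a unit-capacity
flow as `|Δ⁺(X)|` minus two nonnegative slacks: the unused arcs of `Δ⁺(X)` and the flow on
`Δ⁻(X)`. Applied to the vertices reachable from `s` avoiding a cut `C`, this gives weak duality.
A maximum flow has no augmenting path, so for the vertices `X` reachable from `s` in its residual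
digraph both slacks vanish, and the minimum cut size equals the maximum flow value. Hence for
`X ∈ ℛ_st` both slacks vanish as well, i.e. `f = 1` on `Δ⁺(X)` and `f = 0` on `Δ⁻(X)`; this is
(i), and it makes the set in (ii) equal to `Δ⁺(X)`. Conversely a minimum cut `C` equals `Δ⁺` of
the set of vertices reachable from `s` avoiding `C`.
-/

namespace List

theorem exists_nodup_isChain_cons_of_relationReflTransGen {α : Type*} {r : α → α → Prop}
    {a b : α} (h : Relation.ReflTransGen r a b) :
    ∃ l, IsChain r (a :: l) ∧ getLast (a :: l) (cons_ne_nil _ _) = b ∧ (a :: l).Nodup := by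
  induction h using Relation.ReflTransGen.head_induction_on with
  | refl => exact ⟨[], .singleton _, rfl, nodup_singleton _⟩
  | @head a c hac _ ih =>
    obtain ⟨l, hchain, hlast, hnodup⟩ := ih
    by_cases hmem : a ∈ c :: l
    · -- `a` recurs later in the chain: restart the chain from that occurrence
      obtain ⟨p, q, hpq⟩ := append_of_mem hmem
      have hsuf : a :: q <:+ c :: l := ⟨p, hpq.symm⟩
      refine ⟨q, hchain.suffix hsuf, ?_, hnodup.sublist hsuf.sublist⟩
      simpa [hpq] using hlast
    · exact ⟨c :: l, hchain.cons_cons hac, by rwa [getLast_cons_cons],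
        hnodup.cons (by simpa using hmem)⟩

end List

open Classical in
noncomputable def reachableFrom {V : Type*} [Fintype V] (r : V → V → Prop) (s : V) :
    Finset V :=
  Finset.univ.filter (Relation.ReflTransGen r s)

section Reachable

variable {V : Type*} [Fintype V] {r : V → V → Prop} {s u v : V}

@[simp]
theorem mem_reachableFrom : v ∈ reachableFrom r s ↔ Relation.ReflTransGen r s v := by
  simp [reachableFrom]

theorem mem_reachableFrom_of_rel (hu : u ∈ reachableFrom r s) (huv : r u v) :
    v ∈ reachableFrom r s :=
  mem_reachableFrom.mpr ((mem_reachableFrom.mp hu).tail huv)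

end Reachable

def inArcs {V : Type*} [DecidableEq V] (A : Finset (V × V)) (X : Finset V) :
    Finset (V × V) :=
  A.filter fun a => a.1 ∉ X ∧ a.2 ∈ X

def netOut {V : Type*} [DecidableEq V] (A : Finset (V × V)) (f : V × V → ℤ) (v : V) : ℤ :=
  (∑ a ∈ A.filter fun a => a.1 = v, f a) - ∑ a ∈ A.filter fun a => a.2 = v, f a

/-- Residual digraph of a unit-capacity flow: unused arcs forwards, used arcs backwards. -/
def ResidualAdj {V : Type*} (A : Finset (V × V)) (f : V × V → ℤ) (u v : V) : Prop :=
  ((u, v) ∈ A ∧ f (u, v) = 0) ∨ ((v, u) ∈ A ∧ f (v, u) = 1)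

section Flow

open Finset

variable {V : Type*} [DecidableEq V] {A : Finset (V × V)} {s t : V} {f : V × V → ℤ}

theorem sum_netOut_eq_sum_outArcs_sub_sum_inArcs (X : Finset V) :
    (∑ v ∈ X, netOut A f v) = (∑ a ∈ outArcs A X, f a) - ∑ a ∈ inArcs A X, f a := by
  have hsum : ∀ c : V × V → V, (∑ v ∈ X, ∑ a ∈ A.filter fun a => c a = v, f a)
      = ∑ a ∈ A, if c a ∈ X then f a else 0 := by
    intro c
    simp_rw [sum_filter]
    rw [sum_comm]
    exact sum_congr rfl fun a _ => sum_ite_eq X (c a) fun _ => f a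
  simp only [netOut]
  rw [sum_sub_distrib, hsum Prod.fst, hsum Prod.snd, outArcs, inArcs, sum_filter,
    sum_filter, ← sum_sub_distrib, ← sum_sub_distrib]
  refine sum_congr rfl fun a _ => ?_
  by_cases h1 : a.1 ∈ X <;> by_cases h2 : a.2 ∈ X <;> simp [h1, h2]

theorem IsFlow.flowValue_eq_sum_outArcs_sub_sum_inArcs (hf : IsFlow A s t f) {X : Finset V}
    (hs : s ∈ X) (ht : t ∉ X) :
    flowValue A s f = (∑ a ∈ outArcs A X, f a) - ∑ a ∈ inArcs A X, f a := by
  rw [← sum_netOut_eq_sum_outArcs_sub_sum_inArcs, sum_eq_single_of_mem s hs]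
  · rfl
  · intro v hv hvs
    rw [netOut, hf.2 v hvs (ne_of_mem_of_not_mem hv ht), sub_self]

theorem IsFlow.flowValue_eq_card_outArcs_sub (hf : IsFlow A s t f) {X : Finset V} (hs : s ∈ X)
    (ht : t ∉ X) : flowValue A s f =
      #(outArcs A X) - ((∑ a ∈ outArcs A X, (1 - f a)) + ∑ a ∈ inArcs A X, f a) := by
  rw [hf.flowValue_eq_sum_outArcs_sub_sum_inArcs hs ht, sum_sub_distrib]
  simp only [sum_const, nsmul_eq_mul, mul_one]
  ring

theorem IsFlow.sum_slack_nonneg (hf : IsFlow A s t f) (X : Finset V) :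
    0 ≤ ∑ a ∈ outArcs A X, (1 - f a) ∧ 0 ≤ ∑ a ∈ inArcs A X, f a :=
  ⟨sum_nonneg fun a ha => sub_nonneg.mpr (hf.1 a (mem_of_mem_filter a ha)).2,
    sum_nonneg fun a ha => (hf.1 a (mem_of_mem_filter a ha)).1⟩

theorem IsFlow.flowValue_le_card_outArcs (hf : IsFlow A s t f) {X : Finset V} (hs : s ∈ X)
    (ht : t ∉ X) : flowValue A s f ≤ #(outArcs A X) := by
  have := hf.sum_slack_nonneg X
  rw [hf.flowValue_eq_card_outArcs_sub hs ht]
  linarith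

theorem IsFlow.flowValue_eq_card_outArcs_iff (hf : IsFlow A s t f) {X : Finset V} (hs : s ∈ X)
    (ht : t ∉ X) : flowValue A s f = #(outArcs A X) ↔
      (∀ a ∈ outArcs A X, f a = 1) ∧ ∀ a ∈ inArcs A X, f a = 0 := by
  obtain ⟨hout, hin⟩ := hf.sum_slack_nonneg X
  rw [hf.flowValue_eq_card_outArcs_sub hs ht, sub_eq_self, add_eq_zero_iff_of_nonneg hout hin,
    sum_eq_zero_iff_of_nonneg (s := outArcs A X) fun a ha =>
      sub_nonneg.mpr (hf.1 a (mem_of_mem_filter a ha)).2,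
    sum_eq_zero_iff_of_nonneg (s := inArcs A X) fun a ha => (hf.1 a (mem_of_mem_filter a ha)).1]
  simp only [sub_eq_zero, @eq_comm ℤ 1]

theorem isSTCut_outArcs {X : Finset V} (hs : s ∈ X) (ht : t ∉ X) :
    IsSTCut A s t (outArcs A X) := by
  have hstay : ∀ v, Relation.ReflTransGen (fun u v => (u, v) ∈ A ∧ (u, v) ∉ outArcs A X) s v →
      v ∈ X := by
    intro v hv
    induction hv with
    | refl => exact hs
    | tail _ huv ih => by_contra hv; exact huv.2 (mem_filter.mpr ⟨huv.1, ih, hv⟩)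
  exact ⟨filter_subset _ _, fun hpath => ht (hstay t hpath)⟩

end Flow

section Augment

open Finset

variable {V : Type*} [DecidableEq V] {A : Finset (V × V)} {s t : V} {f : V × V → ℤ}

theorem netOut_update {a : V × V} (ha : a ∈ A) (x : ℤ) (v : V) :
    netOut A (Function.update f a x) v =
      netOut A f v + (if a.1 = v then x - f a else 0) - (if a.2 = v then x - f a else 0) := by
  have hupd : Function.update f a x = f + Pi.single a (x - f a) := by
    ext b
    rcases eq_or_ne b a with rfl | hb <;> simp [*]
  simp only [netOut, hupd, Pi.add_apply, sum_add_distrib, sum_pi_single', mem_filter, ha,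
    true_and]
  ring

theorem exists_push_of_residualAdj (hcap : ∀ a ∈ A, 0 ≤ f a ∧ f a ≤ 1) {u c : V}
    (hres : ResidualAdj A f u c) :
    ∃ g : V × V → ℤ, (∀ a ∈ A, 0 ≤ g a ∧ g a ≤ 1) ∧
      (∀ v, netOut A g v =
        netOut A f v + (if u = v then 1 else 0) - (if c = v then 1 else 0)) ∧
      ∀ a, g a ≠ f a → a = (u, c) ∨ a = (c, u) := by
  have hcap_update : ∀ e (x : ℤ), 0 ≤ x → x ≤ 1 →
      ∀ a ∈ A, 0 ≤ Function.update f e x a ∧ Function.update f e x a ≤ 1 := by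
    intro e x hx0 hx1 a ha
    rcases eq_or_ne a e with rfl | hae
    · simp [hx0, hx1]
    · rw [Function.update_of_ne hae]
      exact hcap a ha
  rcases hres with ⟨ha, h0⟩ | ⟨ha, h1⟩
  · refine ⟨Function.update f (u, c) 1, hcap_update _ _ zero_le_one le_rfl, fun v => ?_,
      fun a hne => .inl (by_contra fun h => hne (Function.update_of_ne h _ _))⟩
    rw [netOut_update ha, h0, sub_zero]
  · refine ⟨Function.update f (c, u) 0, hcap_update _ _ le_rfl zero_le_one, fun v => ?_,
      fun a hne => .inr (by_contra fun h => hne (Function.update_of_ne h _ _))⟩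
    rw [netOut_update ha, h1]
    split_ifs <;> ring

theorem exists_augment_of_isChain (hcap : ∀ a ∈ A, 0 ≤ f a ∧ f a ≤ 1) :
    ∀ (l : List V) (u : V), (u :: l).IsChain (ResidualAdj A f) →
      (u :: l).getLast (List.cons_ne_nil _ _) = t → (u :: l).Nodup →
      ∃ g : V × V → ℤ, (∀ a ∈ A, 0 ≤ g a ∧ g a ≤ 1) ∧
        (∀ v, netOut A g v =
          netOut A f v + (if u = v then 1 else 0) - (if t = v then 1 else 0)) ∧
        ∀ a, g a ≠ f a → a.1 ∈ u :: l ∧ a.2 ∈ u :: l := by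
  intro l
  induction l with
  | nil =>
    intro u _ hlast _
    obtain rfl : u = t := hlast
    exact ⟨f, hcap, fun v => by ring, fun a h => absurd rfl h⟩
  | cons c l ih =>
    intro u hchain hlast hnodup
    rw [List.isChain_cons_cons] at hchain
    rw [List.getLast_cons_cons] at hlast
    obtain ⟨hu, hnodup⟩ := List.nodup_cons.mp hnodup
    obtain ⟨g, hgcap, hgnet, hgsupp⟩ := ih c hchain.2 hlast hnodup
    have hres : ResidualAdj A g u c := by
      have hfst : g (u, c) = f (u, c) := by_contra fun h => hu (hgsupp _ h).1
      have hsnd : g (c, u) = f (c, u) := by_contra fun h => hu (hgsupp _ h).2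
      rw [ResidualAdj, hfst, hsnd]
      exact hchain.1
    obtain ⟨g', hcap', hnet', hsupp'⟩ := exists_push_of_residualAdj hgcap hres
    refine ⟨g', hcap', fun v => by rw [hnet', hgnet]; ring, fun a ha => ?_⟩
    by_cases hga : g' a = g a
    · obtain ⟨h1, h2⟩ := hgsupp a (hga ▸ ha)
      exact ⟨List.mem_cons_of_mem _ h1, List.mem_cons_of_mem _ h2⟩
    · rcases hsupp' a hga with rfl | rfl <;> simp

theorem IsMaxFlow.not_reflTransGen_residualAdj (hst : s ≠ t) (hf : IsMaxFlow A s t f) :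
    ¬ Relation.ReflTransGen (ResidualAdj A f) s t := by
  intro h
  obtain ⟨l, hchain, hlast, hnodup⟩ := List.exists_nodup_isChain_cons_of_relationReflTransGen h
  obtain ⟨g, hcap, hnet, -⟩ := exists_augment_of_isChain hf.1.1 l s hchain hlast hnodup
  have hg : IsFlow A s t g := by
    refine ⟨hcap, fun v hvs hvt => ?_⟩
    have hv := hnet v
    rw [if_neg hvs.symm, if_neg hvt.symm] at hv
    have := hf.1.2 v hvs hvt
    simp only [netOut] at hv
    linarith
  have hs := hnet s
  rw [if_pos rfl, if_neg hst.symm] at hs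
  have : flowValue A s g ≤ flowValue A s f := hf.2 g hg
  simp only [flowValue, netOut] at hs this
  linarith

theorem IsMaxFlow.exists_flowValue_eq_card_outArcs [Fintype V] (hst : s ≠ t)
    (hf : IsMaxFlow A s t f) : ∃ X, s ∈ X ∧ t ∉ X ∧ flowValue A s f = #(outArcs A X) := by
  set X := reachableFrom (ResidualAdj A f) s
  have hs : s ∈ X := mem_reachableFrom.mpr .refl
  have ht : t ∉ X := fun h => hf.not_reflTransGen_residualAdj hst (mem_reachableFrom.mp h)
  refine ⟨X, hs, ht, (hf.1.flowValue_eq_card_outArcs_iff hs ht).mpr ⟨?_, ?_⟩⟩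
  · rintro ⟨u, v⟩ ha
    obtain ⟨haA, h1, h2⟩ := mem_filter.mp ha
    have := hf.1.1 _ haA
    by_contra hne
    exact h2 (mem_reachableFrom_of_rel h1 (.inl ⟨haA, by dsimp only; omega⟩))
  · rintro ⟨u, v⟩ ha
    obtain ⟨haA, h1, h2⟩ := mem_filter.mp ha
    have := hf.1.1 _ haA
    by_contra hne
    exact h1 (mem_reachableFrom_of_rel h2 (.inr ⟨haA, by dsimp only; omega⟩))

end Augment

section Cut

open Finset

variable {V : Type*} [Fintype V] {A : Finset (V × V)} {s t : V} {C : Finset (V × V)}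
  {f : V × V → ℤ}

noncomputable def sourceSide (A : Finset (V × V)) (s : V) (C : Finset (V × V)) : Finset V :=
  reachableFrom (fun u v => (u, v) ∈ A ∧ (u, v) ∉ C) s

theorem mem_sourceSide_self : s ∈ sourceSide A s C :=
  mem_reachableFrom.mpr .refl

theorem IsSTCut.notMem_sourceSide (hC : IsSTCut A s t C) : t ∉ sourceSide A s C :=
  fun ht => hC.2 (mem_reachableFrom.mp ht)

variable [DecidableEq V]

theorem outArcs_sourceSide_subset : outArcs A (sourceSide A s C) ⊆ C := by
  intro a ha
  obtain ⟨haA, h1, h2⟩ := mem_filter.mp ha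
  by_contra haC
  exact h2 (mem_reachableFrom_of_rel h1 ⟨haA, haC⟩)

theorem IsFlow.flowValue_le_card (hf : IsFlow A s t f) (hC : IsSTCut A s t C) :
    flowValue A s f ≤ #C :=
  (hf.flowValue_le_card_outArcs mem_sourceSide_self hC.notMem_sourceSide).trans
    (by exact_mod_cast card_le_card outArcs_sourceSide_subset)

theorem IsMinSTCut.exists_mem_Rst (hC : IsMinSTCut A s t C) :
    ∃ X ∈ Rst A s t, outArcs A X = C := by
  have hs := mem_sourceSide_self (A := A) (s := s) (C := C)
  have ht := hC.1.notMem_sourceSide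
  have heq : outArcs A (sourceSide A s C) = C :=
    eq_of_subset_of_card_le outArcs_sourceSide_subset (hC.2 _ (isSTCut_outArcs hs ht))
  exact ⟨_, ⟨hs, ht, by rwa [heq]⟩, heq⟩

theorem IsMinSTCut.card_eq_flowValue (hst : s ≠ t) (hf : IsMaxFlow A s t f)
    (hC : IsMinSTCut A s t C) : (#C : ℤ) = flowValue A s f := by
  obtain ⟨X, hs, ht, hX⟩ := hf.exists_flowValue_eq_card_outArcs hst
  refine le_antisymm ?_ (hf.1.flowValue_le_card hC.1)
  rw [hX]
  exact_mod_cast hC.2 _ (isSTCut_outArcs hs ht)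

end Cut

/-- Let `f` be a maximum `s`-`t` flow of `G` with unit capacities. Then
(i) for every `X ∈ ℛ_st` and every arc `a = (u,v) ∈ A` with `f(a) = 1` and `v ∈ X`, also
`u ∈ X`; and (ii) the set of all minimum `s`-`t` cuts of `G` equals
`{ { a = (u,v) ∈ A : f(a) = 1, u ∈ X, v ∉ X } : X ∈ ℛ_st }`. -/
theorem stmt_12 {V : Type*} [Fintype V] [DecidableEq V]
    (A : Finset (V × V)) (s t : V) (hst : s ≠ t)
    (f : V × V → ℤ) (hf : IsMaxFlow A s t f) :
    (∀ X ∈ Rst A s t, ∀ a ∈ A, f a = 1 → a.2 ∈ X → a.1 ∈ X) ∧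
    {C : Finset (V × V) | IsMinSTCut A s t C} =
      {C : Finset (V × V) | ∃ X ∈ Rst A s t,
        C = A.filter fun a => f a = 1 ∧ a.1 ∈ X ∧ a.2 ∉ X} := by
  have hsat : ∀ X ∈ Rst A s t, (∀ a ∈ outArcs A X, f a = 1) ∧ ∀ a ∈ inArcs A X, f a = 0 :=
    fun X hX => (hf.1.flowValue_eq_card_outArcs_iff hX.1 hX.2.1).mp
      (hX.2.2.card_eq_flowValue hst hf).symm
  have hfilter : ∀ X ∈ Rst A s t,
      (A.filter fun a => f a = 1 ∧ a.1 ∈ X ∧ a.2 ∉ X) = outArcs A X := by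
    intro X hX
    ext a
    simp only [outArcs, Finset.mem_filter]
    exact ⟨fun ⟨ha, _, h⟩ => ⟨ha, h⟩,
      fun ⟨ha, h⟩ => ⟨ha, (hsat X hX).1 a (Finset.mem_filter.mpr ⟨ha, h⟩), h⟩⟩
  refine ⟨fun X hX a ha hfa h2 => by_contra fun h1 => ?_, ?_⟩
  · have := (hsat X hX).2 a (Finset.mem_filter.mpr ⟨ha, h1, h2⟩)
    omega
  · ext C
    constructor
    · intro hC
      obtain ⟨X, hX, rfl⟩ := IsMinSTCut.exists_mem_Rst hC
      exact ⟨X, hX, (hfilter X hX).symm⟩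
    · rintro ⟨X, hX, rfl⟩
      show IsMinSTCut A s t _
      rw [hfilter X hX]
      exact hX.2.2
end

section
/- (i) For every X ∈ ℛ and every pair (u, v) ∈ U × V, if (u, v_u⁻) ∈ X then (u, v) ∈ X. (ii) For every stable matching M, { (u,v) ∈ U × V : (u,v) ∈ P(M) and (u, v_u⁻) ∉ P(M) } = M; consequently, the set of all stable matchings equals { { (u,v) ∈ U × V : (u,v) ∈ X and (u, v_u⁻) ∉ X } : X ∈ ℛ }. -/
/-- A matching between `U` and `V`: every `u ∈ U` lies in exactly one pair and every
`v ∈ V` lies in exactly one pair. -/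
def IsMatching {U V : Type*} (M : Set (U × V)) : Prop :=
  (∀ u : U, ∃! v : V, (u, v) ∈ M) ∧ (∀ v : V, ∃! u : U, (u, v) ∈ M)

/-- A stable matching: a matching with no pair `(u, v)` such that `v <_u p_M(u)` and
`u <_v p_M(v)`. -/
def IsStableMatching {U V : Type*} (prefU : U → V → V → Prop) (prefV : V → U → U → Prop)
    (M : Set (U × V)) : Prop :=
  IsMatching M ∧ ∀ u v u' v', (u, v') ∈ M → (u', v) ∈ M →
    ¬((prefU u v v' ∧ v ≠ v') ∧ (prefV v u u' ∧ u ≠ u'))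

/-- The P-set of a matching `M`: `P(M) = { (u,v) : v ≤_u p_M(u) }`. -/
def PsetSM {U V : Type*} (prefU : U → V → V → Prop) (M : Set (U × V)) : Set (U × V) :=
  {p | ∃ v', (p.1, v') ∈ M ∧ prefU p.1 p.2 v'}

/-- Here `suc u v` encodes the immediate successor `v_u⁻` of `v` in the
order `≤_u` extended with a top element `⊤` adjoined to `V`: `suc u v = none` means
`v_u⁻ = ⊤`, and `suc u v = some v'` means `v_u⁻ = v' ∈ V`. With
`ℛ := { P(M) : M a stable matching }`:
(i) for every `X ∈ ℛ` and every pair `(u, v)`, if `(u, v_u⁻) ∈ X` then `(u, v) ∈ X`;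
(ii) for every stable matching `M`,
`{ (u,v) : (u,v) ∈ P(M), (u, v_u⁻) ∉ P(M) } = M`; consequently the set of all stable
matchings equals `{ { (u,v) : (u,v) ∈ X, (u, v_u⁻) ∉ X } : X ∈ ℛ }`. -/
theorem stmt_14 {U V : Type*} [Fintype U] [Fintype V] [DecidableEq U] [DecidableEq V]
    (n : ℕ) (hn : 1 ≤ n) (hU : Fintype.card U = n) (hV : Fintype.card V = n)
    (prefU : U → V → V → Prop) (hprefU : ∀ u, IsLinearOrder V (prefU u))
    (prefV : V → U → U → Prop) (hprefV : ∀ v, IsLinearOrder U (prefV v))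
    (suc : U → V → Option V)
    (hsucNone : ∀ u v, suc u v = none ↔ ∀ v' : V, prefU u v' v)
    (hsucSome : ∀ u v v', suc u v = some v' ↔
      ((prefU u v v' ∧ v ≠ v') ∧ ∀ w : V, prefU u v w ∧ v ≠ w → prefU u v' w)) :
    (∀ X ∈ {X : Set (U × V) | ∃ M : Set (U × V),
        IsStableMatching prefU prefV M ∧ X = PsetSM prefU M},
      ∀ u v, (∃ v', suc u v = some v' ∧ (u, v') ∈ X) → (u, v) ∈ X) ∧
    (∀ M : Set (U × V), IsStableMatching prefU prefV M →
      {p : U × V | p ∈ PsetSM prefU M ∧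
        ¬∃ v', suc p.1 p.2 = some v' ∧ (p.1, v') ∈ PsetSM prefU M} = M) ∧
    ({M : Set (U × V) | IsStableMatching prefU prefV M} =
      {S : Set (U × V) | ∃ X ∈ {X : Set (U × V) | ∃ M : Set (U × V),
          IsStableMatching prefU prefV M ∧ X = PsetSM prefU M},
        S = {p : U × V | p ∈ X ∧ ¬∃ v', suc p.1 p.2 = some v' ∧ (p.1, v') ∈ X}}) := by
  have refl : ∀ u v, prefU u v v := fun u v => (hprefU u).refl v
  have trans : ∀ u a b c, prefU u a b → prefU u b c → prefU u a c :=
    fun u a b c => (hprefU u).trans a b c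
  have antisymm : ∀ u a b, prefU u a b → prefU u b a → a = b :=
    fun u a b => (hprefU u).antisymm a b
  have key2 : ∀ M : Set (U × V), IsStableMatching prefU prefV M →
      {p : U × V | p ∈ PsetSM prefU M ∧
        ¬∃ v', suc p.1 p.2 = some v' ∧ (p.1, v') ∈ PsetSM prefU M} = M := by
    intro M hM
    ext ⟨u, v⟩
    simp only [Set.mem_setOf_eq, PsetSM]
    constructor
    · rintro ⟨⟨w, hwM, hvw⟩, hns⟩
      by_cases hvw' : v = w
      · subst hvw'; exact hwM
      · exfalso
        cases h : suc u v with
        | none =>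
          exact hvw' (antisymm u v w hvw ((hsucNone u v).mp h w))
        | some v'' =>
          exact hns ⟨v'', h, w, hwM, ((hsucSome u v v'').mp h).2 w ⟨hvw, hvw'⟩⟩
    · intro hvM
      refine ⟨⟨v, hvM, refl u v⟩, ?_⟩
      rintro ⟨v'', hs, w, hwM, hw⟩
      obtain ⟨v0, hv0, huniq⟩ := hM.1.1 u
      have hwv : w = v := (huniq w hwM).trans (huniq v hvM).symm
      have h1 := (hsucSome u v v'').mp hs
      exact h1.1.2 (antisymm u v v'' h1.1.1 (hwv ▸ hw))
  refine ⟨?_, key2, ?_⟩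
  · rintro X ⟨M, hM, rfl⟩ u v ⟨v', hsuc, w, hwM, hvw⟩
    exact ⟨w, hwM, trans u v v' w ((hsucSome u v v').mp hsuc).1.1 hvw⟩
  · ext M
    simp only [Set.mem_setOf_eq]
    constructor
    · intro hM
      exact ⟨PsetSM prefU M, ⟨M, hM, rfl⟩, (key2 M hM).symm⟩
    · rintro ⟨X, ⟨M', hM', rfl⟩, rfl⟩
      rw [key2 M' hM']
      exact hM'
end
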